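/- arXiv:2210.14708 — 13 statements merged into one kernel-verified Lean document; each statement's English description precedes it below -/
import Mathlib

section
/- For a finite group G, the power graph P(G) equals the order super power graph P^o(G) if and only if G is cyclic. -/
/-- The power graph of a group `G`: distinct `x, y` are adjacent iff one is a power
of the other, i.e. `x ∈ ⟨y⟩` or `y ∈ ⟨x⟩`. -/
def powerGraph (G : Type*) [Group G] : SimpleGraph G :=
  SimpleGraph.fromRel (fun x y => x ∈ Subgroup.zpowers y)

/-- The enhanced power graph of a group `G`: distinct `x, y` are adjacent iff they lie
in a common cyclic subgroup. -/
def enhancedPowerGraph (G : Type*) [Group G] : SimpleGraph G :=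
  SimpleGraph.fromRel
    (fun x y => ∃ z : G, x ∈ Subgroup.zpowers z ∧ y ∈ Subgroup.zpowers z)

/-- The commuting graph of a group `G`: distinct `x, y` are adjacent iff they commute. -/
def commutingGraph (G : Type*) [Group G] : SimpleGraph G :=
  SimpleGraph.fromRel (fun x y => x * y = y * x)

/-- The order super graph of a graph `A` on a group `G`: distinct `x, y` are adjacent iff
they have the same order, or some elements of the same orders are adjacent in `A`. -/
def orderSuper (G : Type*) [Group G] (A : SimpleGraph G) : SimpleGraph G :=
  SimpleGraph.fromRel (fun x y =>
    orderOf x = orderOf y ∨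
      ∃ x' y' : G, orderOf x' = orderOf x ∧ orderOf y' = orderOf y ∧ A.Adj x' y')

/-- The conjugacy super graph of a graph `A` on a group `G`: distinct `x, y` are adjacent
iff they are conjugate, or some conjugates of them are adjacent in `A`. -/
def conjSuper (G : Type*) [Group G] (A : SimpleGraph G) : SimpleGraph G :=
  SimpleGraph.fromRel (fun x y =>
    IsConj x y ∨ ∃ x' y' : G, IsConj x x' ∧ IsConj y y' ∧ A.Adj x' y')

/-- A vertex of a simple graph is dominant if it is adjacent to every other vertex. -/
def IsDominantVertex {V : Type*} (Γ : SimpleGraph V) (v : V) : Prop :=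
  ∀ w, w ≠ v → Γ.Adj v w

/-!
If `P(G) = P^o(G)`, two elements of the same order are adjacent in `P(G)`, hence generate the
same cyclic subgroup. So all elements of order `m` lie in one cyclic group of order `m`, there are
at most `φ(m)` of them, hence at most `n` solutions of `x ^ n = 1`, and `G` is cyclic.
Conversely, in a finite cyclic group `⟨y⟩` contains every element whose order divides `o(y)`,
so adjacency in `P^o(G)`, which forces one order to divide the other, gives adjacency in `P(G)`.
-/

open Subgroup Finset

section

variable {G : Type*} [Group G]

lemma powerGraph_adj {x y : G} :
    (powerGraph G).Adj x y ↔ x ≠ y ∧ (x ∈ zpowers y ∨ y ∈ zpowers x) :=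
  SimpleGraph.fromRel_adj _ x y

lemma le_orderSuper (A : SimpleGraph G) : A ≤ orderSuper G A := fun x y hxy =>
  (SimpleGraph.fromRel_adj _ x y).mpr ⟨hxy.ne, Or.inl (Or.inr ⟨x, y, rfl, rfl, hxy⟩)⟩

lemma orderSuper_adj_of_orderOf_eq (A : SimpleGraph G) {x y : G} (hne : x ≠ y)
    (h : orderOf x = orderOf y) : (orderSuper G A).Adj x y :=
  (SimpleGraph.fromRel_adj _ x y).mpr ⟨hne, Or.inl (Or.inl h)⟩

lemma orderOf_dvd_or_dvd_of_powerGraph_adj {x y : G} (h : (powerGraph G).Adj x y) :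
    orderOf x ∣ orderOf y ∨ orderOf y ∣ orderOf x :=
  (powerGraph_adj.mp h).2.imp orderOf_dvd_of_mem_zpowers orderOf_dvd_of_mem_zpowers

lemma orderOf_dvd_or_dvd_of_orderSuper_powerGraph_adj {x y : G}
    (h : (orderSuper G (powerGraph G)).Adj x y) :
    orderOf x ∣ orderOf y ∨ orderOf y ∣ orderOf x := by
  have dvd_or_dvd : ∀ u v : G, (orderOf u = orderOf v ∨ ∃ u' v' : G, orderOf u' = orderOf u ∧
      orderOf v' = orderOf v ∧ (powerGraph G).Adj u' v') →
      orderOf u ∣ orderOf v ∨ orderOf v ∣ orderOf u := by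
    rintro u v (huv | ⟨u', v', hu, hv, hadj⟩)
    · exact .inl huv.dvd
    · exact hu ▸ hv ▸ orderOf_dvd_or_dvd_of_powerGraph_adj hadj
  rcases ((SimpleGraph.fromRel_adj _ x y).mp h).2 with hxy | hyx
  · exact dvd_or_dvd x y hxy
  · exact (dvd_or_dvd y x hyx).symm

lemma mem_zpowers_of_mem_zpowers_of_orderOf_eq [Finite G] {x y : G}
    (hxy : orderOf x = orderOf y) (hy : y ∈ zpowers x) : x ∈ zpowers y := by
  have : zpowers y = zpowers x :=
    eq_of_le_of_card_ge (zpowers_le.mpr hy) (by rw [Nat.card_zpowers, Nat.card_zpowers, hxy])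
  exact this ▸ mem_zpowers x

theorem IsCyclic.mem_zpowers_of_orderOf_dvd [Fintype G] [IsCyclic G] {x y : G}
    (h : orderOf x ∣ orderOf y) : x ∈ zpowers y := by
  classical
  -- `⟨y⟩` already has `orderOf y` elements, so it exhausts the solutions of `a ^ orderOf y = 1`.
  have hsub : (zpowers y : Set G) ⊆ {a | a ^ orderOf y = 1} := fun a ha =>
    orderOf_dvd_iff_pow_eq_one.mp (orderOf_dvd_of_mem_zpowers ha)
  have hcard : {a : G | a ^ orderOf y = 1}.ncard ≤ (zpowers y : Set G).ncard := by
    rw [← Nat.card_coe_set_eq (zpowers y : Set G), SetLike.coe_sort_coe, Nat.card_zpowers]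
    simpa [← Set.ncard_coe_finset] using IsCyclic.card_pow_eq_one_le (α := G) (orderOf_pos y)
  have heq := Set.eq_of_subset_of_ncard_le hsub hcard (Set.toFinite _)
  have hx : x ∈ {a : G | a ^ orderOf y = 1} := orderOf_dvd_iff_pow_eq_one.mp h
  rwa [← heq, SetLike.mem_coe] at hx

lemma IsCyclic.powerGraph_adj_iff [Fintype G] [IsCyclic G] {x y : G} :
    (powerGraph G).Adj x y ↔ x ≠ y ∧ (orderOf x ∣ orderOf y ∨ orderOf y ∣ orderOf x) := by
  rw [powerGraph_adj]
  exact and_congr_right fun _ => or_congr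
    ⟨orderOf_dvd_of_mem_zpowers, mem_zpowers_of_orderOf_dvd⟩
    ⟨orderOf_dvd_of_mem_zpowers, mem_zpowers_of_orderOf_dvd⟩

lemma card_orderOf_eq_le_totient [Fintype G] [DecidableEq G]
    (h : ∀ x y : G, orderOf x = orderOf y → x ∈ zpowers y) (m : ℕ) :
    #{a : G | orderOf a = m} ≤ m.totient := by
  rcases Finset.eq_empty_or_nonempty {a : G | orderOf a = m} with hempty | ⟨y, hy⟩
  · simp [hempty]
  have hym : orderOf y = m := (Finset.mem_filter.mp hy).2
  calc #{a : G | orderOf a = m}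
      ≤ #(({a : zpowers y | orderOf a = m} : Finset (zpowers y)).map
          (Function.Embedding.subtype _)) := by
        refine Finset.card_le_card fun a ha => ?_
        have ha : orderOf a = m := (Finset.mem_filter.mp ha).2
        exact Finset.mem_map.mpr ⟨⟨a, h a y (ha.trans hym.symm)⟩,
          Finset.mem_filter.mpr ⟨Finset.mem_univ _, by rwa [Subgroup.orderOf_mk]⟩, rfl⟩
    _ = m.totient := by
        rw [Finset.card_map]
        exact IsCyclic.card_orderOf_eq_totient (by rw [Fintype.card_zpowers, hym])

theorem isCyclic_of_forall_orderOf_eq_mem_zpowers [Fintype G]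
    (h : ∀ x y : G, orderOf x = orderOf y → x ∈ zpowers y) : IsCyclic G := by
  classical
  refine isCyclic_of_card_pow_eq_one_le fun n hn => ?_
  calc #{a : G | a ^ n = 1} = ∑ m ∈ n.divisors, #{a : G | orderOf a = m} :=
        (sum_card_orderOf_eq_card_pow_eq_one hn.ne').symm
    _ ≤ ∑ m ∈ n.divisors, m.totient := Finset.sum_le_sum fun m _ => card_orderOf_eq_le_totient h m
    _ = n := Nat.sum_totient n

end

/-- For a finite group `G`, the power graph equals the order super power graph iff
`G` is cyclic. -/
theorem powerGraph_eq_orderSuper_iff_isCyclic (G : Type*) [Group G] [Fintype G] :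
    powerGraph G = orderSuper G (powerGraph G) ↔ IsCyclic G := by
  constructor
  · intro h
    refine isCyclic_of_forall_orderOf_eq_mem_zpowers fun x y hxy => ?_
    rcases eq_or_ne x y with rfl | hne
    · exact mem_zpowers x
    have hadj : (powerGraph G).Adj x y := h ▸ orderSuper_adj_of_orderOf_eq _ hne hxy
    exact (powerGraph_adj.mp hadj).2.elim id (mem_zpowers_of_mem_zpowers_of_orderOf_eq hxy)
  · intro _
    refine le_antisymm (le_orderSuper _) fun x y hxy => ?_
    exact IsCyclic.powerGraph_adj_iff.mpr
      ⟨hxy.ne, orderOf_dvd_or_dvd_of_orderSuper_powerGraph_adj hxy⟩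
end

section
/- For a finite group G, the conjugacy super power graph P^c(G) equals the conjugacy super enhanced power graph P_e^c(G) if and only if every element of G has prime power order (i.e., for every x ∈ G, o(x) = p^k for some prime p and integer k ≥ 0). -/
/-!
If every element has prime power order, two powers of a common element `z` are comparable:
`⟨z ^ a⟩ = ⟨z ^ gcd(a, o(z))⟩`, and these gcds are powers of one prime, hence totally ordered
by divisibility. So the power graph and the enhanced power graph already coincide.
Conversely, if `o(x)` has two distinct prime divisors `p` and `q`, the elements of orders `p`
and `q` in `⟨x⟩` are adjacent in the enhanced power graph, while adjacency in the conjugacy super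
power graph forces one of the two orders to divide the other.
-/

open Subgroup

section Group

variable {G : Type*} [Group G]

theorem IsConj.orderOf_eq {x y : G} (h : IsConj x y) : orderOf x = orderOf y := by
  obtain ⟨c, hc⟩ := h
  exact hc.orderOf_eq

theorem zpow_mem_zpowers_zpow_of_gcd_dvd (z : G) {a b : ℤ}
    (h : (a.gcd (orderOf z) : ℤ) ∣ b) : z ^ b ∈ zpowers (z ^ a) := by
  obtain ⟨c, rfl⟩ := h
  have hgcd : z ^ (a.gcd (orderOf z) : ℤ) = (z ^ a) ^ a.gcdA (orderOf z) := by
    rw [Int.gcd_eq_gcd_ab, zpow_add, zpow_mul, zpow_mul, zpow_natCast, pow_orderOf_eq_one,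
      one_zpow, mul_one]
  rw [zpow_mul, hgcd, ← zpow_mul]
  exact zpow_mem (mem_zpowers _) _

theorem mem_zpowers_or_mem_zpowers_of_orderOf_eq_prime_pow {z x y : G} {p k : ℕ}
    (hp : p.Prime) (hz : orderOf z = p ^ k) (hx : x ∈ zpowers z) (hy : y ∈ zpowers z) :
    x ∈ zpowers y ∨ y ∈ zpowers x := by
  obtain ⟨a, rfl⟩ := hx
  obtain ⟨b, rfl⟩ := hy
  have gcd_dvd_order (c : ℤ) : c.gcd (orderOf z) ∣ p ^ k :=
    hz ▸ Int.natCast_dvd_natCast.mp (Int.gcd_dvd_right _ _)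
  obtain ⟨i, -, hi⟩ := (Nat.dvd_prime_pow hp).mp (gcd_dvd_order a)
  obtain ⟨j, -, hj⟩ := (Nat.dvd_prime_pow hp).mp (gcd_dvd_order b)
  rcases le_total i j with hij | hji
  · refine .inr (zpow_mem_zpowers_zpow_of_gcd_dvd z ?_)
    rw [hi]
    exact (Int.natCast_dvd_natCast.mpr (pow_dvd_pow p hij)).trans (hj ▸ Int.gcd_dvd_left _ _)
  · refine .inl (zpow_mem_zpowers_zpow_of_gcd_dvd z ?_)
    rw [hj]
    exact (Int.natCast_dvd_natCast.mpr (pow_dvd_pow p hji)).trans (hi ▸ Int.gcd_dvd_left _ _)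

theorem powerGraph_le_enhancedPowerGraph : powerGraph G ≤ enhancedPowerGraph G := by
  rintro x y ⟨hne, hxy | hyx⟩
  · exact ⟨hne, .inl ⟨y, hxy, mem_zpowers y⟩⟩
  · exact ⟨hne, .inl ⟨x, mem_zpowers x, hyx⟩⟩

theorem enhancedPowerGraph_le_powerGraph
    (h : ∀ x : G, ∃ (p k : ℕ), p.Prime ∧ orderOf x = p ^ k) :
    enhancedPowerGraph G ≤ powerGraph G := by
  rintro x y ⟨hne, ⟨z, hx, hy⟩ | ⟨z, hy, hx⟩⟩ <;>
  · obtain ⟨p, k, hp, hz⟩ := h z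
    exact ⟨hne, mem_zpowers_or_mem_zpowers_of_orderOf_eq_prime_pow hp hz hx hy⟩

theorem le_conjSuper (A : SimpleGraph G) : A ≤ conjSuper G A :=
  fun x y hxy => ⟨hxy.ne, .inl (.inr ⟨x, y, .refl x, .refl y, hxy⟩)⟩

theorem orderOf_dvd_or_dvd_of_conjSuper_powerGraph_adj {x y : G}
    (h : (conjSuper G (powerGraph G)).Adj x y) :
    orderOf x ∣ orderOf y ∨ orderOf y ∣ orderOf x := by
  obtain ⟨-, hxy | hyx⟩ := h
  · obtain hconj | ⟨x', y', hx, hy, -, hpow⟩ := hxy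
    · exact .inl hconj.orderOf_eq.dvd
    · rw [hx.orderOf_eq, hy.orderOf_eq]
      exact hpow.imp orderOf_dvd_of_mem_zpowers orderOf_dvd_of_mem_zpowers
  · obtain hconj | ⟨y', x', hy, hx, -, hpow⟩ := hyx
    · exact .inl hconj.orderOf_eq.symm.dvd
    · rw [hx.orderOf_eq, hy.orderOf_eq]
      exact (hpow.imp orderOf_dvd_of_mem_zpowers orderOf_dvd_of_mem_zpowers).symm

end Group

theorem Nat.exists_prime_ne_dvd_of_ne_prime_pow {n : ℕ} (hn : n ≠ 0)
    (h : ¬ ∃ (p k : ℕ), p.Prime ∧ n = p ^ k) :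
    ∃ p q : ℕ, p.Prime ∧ q.Prime ∧ p ≠ q ∧ p ∣ n ∧ q ∣ n := by
  have hn1 : n ≠ 1 := fun h1 => h ⟨2, 0, Nat.prime_two, h1⟩
  by_contra! hunique
  refine h ⟨n.minFac, _, Nat.minFac_prime hn1, Nat.eq_prime_pow_of_unique_prime_dvd hn ?_⟩
  intro q hq hqn
  by_contra hne
  exact hunique q n.minFac hq (Nat.minFac_prime hn1) hne hqn (Nat.minFac_dvd n)

/-- For a finite group `G`, the conjugacy super power graph equals the conjugacy super
enhanced power graph iff every element of `G` has prime power order. -/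
theorem conjSuper_powerGraph_eq_conjSuper_enhancedPowerGraph_iff
    (G : Type*) [Group G] [Fintype G] :
    conjSuper G (powerGraph G) = conjSuper G (enhancedPowerGraph G) ↔
      ∀ x : G, ∃ (p k : ℕ), p.Prime ∧ orderOf x = p ^ k := by
  refine ⟨fun h x => ?_, fun h => ?_⟩
  · by_contra hx
    obtain ⟨p, q, hp, hq, hpq, hpx, hqx⟩ :=
      Nat.exists_prime_ne_dvd_of_ne_prime_pow (orderOf_pos x).ne' hx
    have hxp := orderOf_pow_orderOf_div (orderOf_pos x).ne' hpx
    have hxq := orderOf_pow_orderOf_div (orderOf_pos x).ne' hqx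
    have hadj : (enhancedPowerGraph G).Adj (x ^ (orderOf x / p)) (x ^ (orderOf x / q)) :=
      ⟨fun e => hpq (by rw [← hxp, ← hxq, e]),
        .inl ⟨x, pow_mem (mem_zpowers x) _, pow_mem (mem_zpowers x) _⟩⟩
    have hdvd := orderOf_dvd_or_dvd_of_conjSuper_powerGraph_adj (h ▸ le_conjSuper _ hadj)
    rw [hxp, hxq, Nat.prime_dvd_prime_iff_eq hp hq, Nat.prime_dvd_prime_iff_eq hq hp] at hdvd
    exact hpq (hdvd.elim id Eq.symm)
  · exact congrArg (conjSuper G)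
      (le_antisymm powerGraph_le_enhancedPowerGraph (enhancedPowerGraph_le_powerGraph h))
end

section
/- For a finite group G, the commuting graph Δ(G) equals the order super commuting graph Δ^o(G) if and only if G is abelian. -/
section AuxCommOrderSuper
set_option linter.unusedSectionVars false
variable {G : Type*} [Group G] [Fintype G]

private lemma commutingGraph_adj' {x y : G} :
    (commutingGraph G).Adj x y ↔ x ≠ y ∧ x * y = y * x := by
  rw [commutingGraph, SimpleGraph.fromRel_adj]
  constructor
  · rintro ⟨h, h1 | h1⟩
    · exact ⟨h, h1⟩
    · exact ⟨h, h1.symm⟩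
  · rintro ⟨h, h1⟩
    exact ⟨h, Or.inl h1⟩

private lemma comm_of_orderOf_eq' (heq : commutingGraph G = orderSuper G (commutingGraph G))
    {x y : G} (h : orderOf x = orderOf y) : Commute x y := by
  rcases eq_or_ne x y with rfl | hne
  · exact Commute.refl x
  · have hadj : (orderSuper G (commutingGraph G)).Adj x y := by
      rw [orderSuper, SimpleGraph.fromRel_adj]
      exact ⟨hne, Or.inl (Or.inl h)⟩
    rw [← heq, commutingGraph_adj'] at hadj
    exact hadj.2

private lemma comm_prime_pow' (heq : commutingGraph G = orderSuper G (commutingGraph G))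
    {p α β : ℕ} (hp : p.Prime) (hle : α ≤ β) {a b : G}
    (ha : orderOf a = p ^ α) (hb : orderOf b = p ^ β) : Commute a b := by
  rcases eq_or_lt_of_le hle with rfl | hlt
  · exact comm_of_orderOf_eq' heq (ha.trans hb.symm)
  · have hne : a ≠ b := by
      rintro rfl
      rw [ha] at hb
      exact hlt.ne (Nat.pow_right_injective hp.two_le hb)
    have hb' : orderOf (b ^ p ^ (β - α)) = p ^ α := by
      rw [orderOf_pow, hb, Nat.gcd_eq_right (pow_dvd_pow p (Nat.sub_le β α)),
        Nat.pow_div (Nat.sub_le β α) hp.pos, Nat.sub_sub_self hle]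
    have hadj : (orderSuper G (commutingGraph G)).Adj a b := by
      rw [orderSuper, SimpleGraph.fromRel_adj]
      refine ⟨hne, Or.inl (Or.inr ⟨b ^ p ^ (β - α), b, by rw [hb', ha], rfl, ?_⟩)⟩
      rw [commutingGraph_adj']
      refine ⟨?_, ((Commute.refl b).pow_left _).eq⟩
      intro h
      rw [h, hb] at hb'
      exact hlt.ne' (Nat.pow_right_injective hp.two_le hb')
    rw [← heq, commutingGraph_adj'] at hadj
    exact hadj.2

private lemma comm_of_coprime' (heq : commutingGraph G = orderSuper G (commutingGraph G))
    {a b : G} (hco : Nat.Coprime (orderOf a) (orderOf b)) : Commute a b := by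
  have hub : orderOf (a * b * a⁻¹) = orderOf b := by
    have h1 : SemiconjBy a b (a * b * a⁻¹) := by unfold SemiconjBy; group
    exact (SemiconjBy.orderOf_eq a h1).symm
  have hva : orderOf (b * a⁻¹ * b⁻¹) = orderOf a := by
    have h1 : SemiconjBy b a⁻¹ (b * a⁻¹ * b⁻¹) := by unfold SemiconjBy; group
    rw [← SemiconjBy.orderOf_eq b h1, orderOf_inv]
  have hu : Commute (a * b * a⁻¹) b := comm_of_orderOf_eq' heq hub
  have hv : Commute a (b * a⁻¹ * b⁻¹) := (comm_of_orderOf_eq' heq hva).symm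
  have hcn : (a * b * a⁻¹ * b⁻¹) ^ orderOf b = 1 := by
    rw [hu.inv_right.mul_pow, inv_pow, pow_orderOf_eq_one, inv_one, mul_one,
      ← hub, pow_orderOf_eq_one]
  have hcm : (a * b * a⁻¹ * b⁻¹) ^ orderOf a = 1 := by
    have h1 : a * b * a⁻¹ * b⁻¹ = a * (b * a⁻¹ * b⁻¹) := by group
    rw [h1, hv.mul_pow, pow_orderOf_eq_one, one_mul, ← hva, pow_orderOf_eq_one]
  have hdvd : orderOf (a * b * a⁻¹ * b⁻¹) ∣ Nat.gcd (orderOf a) (orderOf b) :=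
    Nat.dvd_gcd (orderOf_dvd_of_pow_eq_one hcm) (orderOf_dvd_of_pow_eq_one hcn)
  rw [Nat.Coprime] at hco
  rw [hco, Nat.dvd_one, orderOf_eq_one_iff] at hdvd
  have h2 : a * b = (a * b * a⁻¹ * b⁻¹) * (b * a) := by group
  rw [hdvd, one_mul] at h2
  exact h2

private lemma split_elem' (x : G) {m₁ m₂ : ℕ} (hco : Nat.Coprime m₁ m₂)
    (hx : orderOf x = m₁ * m₂) :
    ∃ g h : G, g * h = x ∧ orderOf g ∣ m₂ ∧ orderOf h ∣ m₁ := by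
  obtain ⟨u, v, huv⟩ := Nat.isCoprime_iff_coprime.mpr hco
  have hx1 : x ^ (((m₁ * m₂ : ℕ)) : ℤ) = 1 := by
    rw [zpow_natCast, ← hx, pow_orderOf_eq_one]
  refine ⟨x ^ (u * (m₁ : ℤ)), x ^ (v * (m₂ : ℤ)), ?_, ?_, ?_⟩
  · rw [← zpow_add, huv, zpow_one]
  · rw [orderOf_dvd_iff_pow_eq_one]
    have h2 : (x ^ (u * (m₁ : ℤ))) ^ (m₂ : ℕ) = x ^ ((((m₁ * m₂ : ℕ)) : ℤ) * u) := by
      rw [← zpow_natCast _ m₂, ← zpow_mul]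
      congr 1
      push_cast
      ring
    rw [h2, zpow_mul, hx1, one_zpow]
  · rw [orderOf_dvd_iff_pow_eq_one]
    have h2 : (x ^ (v * (m₂ : ℤ))) ^ (m₁ : ℕ) = x ^ ((((m₁ * m₂ : ℕ)) : ℤ) * v) := by
      rw [← zpow_natCast _ m₁, ← zpow_mul]
      congr 1
      push_cast
      ring
    rw [h2, zpow_mul, hx1, one_zpow]

private lemma decomp_of_not_prime_pow' {k : ℕ} (hk0 : k ≠ 0) (hk1 : k ≠ 1)
    (h2 : ¬ IsPrimePow k) :
    ∃ m₁ m₂ : ℕ, Nat.Coprime m₁ m₂ ∧ k = m₁ * m₂ ∧ 1 < m₁ ∧ 1 < m₂ := by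
  set p := k.minFac with hpdef
  have hp : p.Prime := Nat.minFac_prime hk1
  set α := k.factorization p with hαdef
  have hα : 0 < α := hp.factorization_pos_of_dvd hk0 (Nat.minFac_dvd k)
  refine ⟨p ^ α, k / p ^ α, Nat.Coprime.pow_left _ (Nat.coprime_ordCompl hp hk0), ?_, ?_, ?_⟩
  · exact (Nat.ordProj_mul_ordCompl_eq_self k p).symm
  · exact Nat.one_lt_pow hα.ne' hp.one_lt
  · rcases Nat.lt_or_ge 1 (k / p ^ α) with h | h
    · exact h
    · exfalso
      have hpos : 0 < k / p ^ α := Nat.ordCompl_pos p hk0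
      have h3 : k / p ^ α = 1 := le_antisymm h hpos
      apply h2
      refine ⟨p, α, Nat.prime_iff.mp hp, hα, ?_⟩
      conv_rhs => rw [← Nat.ordProj_mul_ordCompl_eq_self k p]
      rw [← hαdef, h3, mul_one]

private lemma comm_all' (heq : commutingGraph G = orderSuper G (commutingGraph G)) :
    ∀ n : ℕ, ∀ x y : G, orderOf x * orderOf y ≤ n → Commute x y := by
  intro n
  induction n using Nat.strong_induction_on with
  | _ n ih =>
    intro x y hn
    by_cases hco : Nat.Coprime (orderOf x) (orderOf y)
    · exact comm_of_coprime' heq hco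
    by_cases heqo : orderOf x = orderOf y
    · exact comm_of_orderOf_eq' heq heqo
    by_cases h1 : IsPrimePow (orderOf x)
    · by_cases h2 : IsPrimePow (orderOf y)
      · obtain ⟨p, α, hp, hα, hpm⟩ := h1
        obtain ⟨q, β, hq, hβ, hqm⟩ := h2
        have hpq : p = q := by
          by_contra hne
          refine hco ?_
          rw [← hpm, ← hqm]
          exact Nat.Coprime.pow α β
            ((Nat.coprime_primes (Nat.prime_iff.mpr hp) (Nat.prime_iff.mpr hq)).mpr hne)
        subst hpq
        rcases le_total α β with h | h
        · exact comm_prime_pow' heq (Nat.prime_iff.mpr hp) h hpm.symm hqm.symm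
        · exact (comm_prime_pow' heq (Nat.prime_iff.mpr hp) h hqm.symm hpm.symm).symm
      · -- split y
        have hk0 : orderOf y ≠ 0 := (orderOf_pos y).ne'
        have hk1 : orderOf y ≠ 1 := fun h => hco (h ▸ Nat.coprime_one_right _)
        obtain ⟨m₁, m₂, hcop, hmul, hm₁, hm₂⟩ := decomp_of_not_prime_pow' hk0 hk1 h2
        obtain ⟨g, h, hgh, hg, hh⟩ := split_elem' y hcop hmul
        have hxpos : 0 < orderOf x := orderOf_pos x
        have hglt : orderOf g < orderOf y := by
          have h1 : orderOf g ≤ m₂ := Nat.le_of_dvd (by omega) hg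
          have h2 : m₂ < orderOf y := by
            rw [hmul]
            calc m₂ = 1 * m₂ := (one_mul m₂).symm
            _ < m₁ * m₂ := by exact (Nat.mul_lt_mul_right (by omega)).mpr hm₁
          omega
        have hhlt : orderOf h < orderOf y := by
          have h1 : orderOf h ≤ m₁ := Nat.le_of_dvd (by omega) hh
          have h2 : m₁ < orderOf y := by
            rw [hmul]
            calc m₁ = m₁ * 1 := (mul_one m₁).symm
            _ < m₁ * m₂ := by exact (Nat.mul_lt_mul_left (by omega)).mpr hm₂
          omega
        have hyn : 0 < orderOf y := orderOf_pos y
        have c1 : Commute x g :=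
          ih (orderOf x * orderOf g)
            (lt_of_lt_of_le ((Nat.mul_lt_mul_left hxpos).mpr hglt) hn) x g le_rfl
        have c2 : Commute x h :=
          ih (orderOf x * orderOf h)
            (lt_of_lt_of_le ((Nat.mul_lt_mul_left hxpos).mpr hhlt) hn) x h le_rfl
        rw [← hgh]
        exact c1.mul_right c2
    · -- split x
      have hk0 : orderOf x ≠ 0 := (orderOf_pos x).ne'
      have hk1 : orderOf x ≠ 1 := fun h => hco (h ▸ Nat.coprime_one_left _)
      obtain ⟨m₁, m₂, hcop, hmul, hm₁, hm₂⟩ := decomp_of_not_prime_pow' hk0 hk1 h1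
      obtain ⟨g, h, hgh, hg, hh⟩ := split_elem' x hcop hmul
      have hypos : 0 < orderOf y := orderOf_pos y
      have hglt : orderOf g < orderOf x := by
        have h1 : orderOf g ≤ m₂ := Nat.le_of_dvd (by omega) hg
        have h2 : m₂ < orderOf x := by
          rw [hmul]
          calc m₂ = 1 * m₂ := (one_mul m₂).symm
          _ < m₁ * m₂ := by exact (Nat.mul_lt_mul_right (by omega)).mpr hm₁
        omega
      have hhlt : orderOf h < orderOf x := by
        have h1 : orderOf h ≤ m₁ := Nat.le_of_dvd (by omega) hh
        have h2 : m₁ < orderOf x := by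
          rw [hmul]
          calc m₁ = m₁ * 1 := (mul_one m₁).symm
          _ < m₁ * m₂ := by exact (Nat.mul_lt_mul_left (by omega)).mpr hm₂
        omega
      have c1 : Commute g y :=
        ih (orderOf g * orderOf y)
          (lt_of_lt_of_le ((Nat.mul_lt_mul_right hypos).mpr hglt) hn) g y le_rfl
      have c2 : Commute h y :=
        ih (orderOf h * orderOf y)
          (lt_of_lt_of_le ((Nat.mul_lt_mul_right hypos).mpr hhlt) hn) h y le_rfl
      rw [← hgh]
      exact c1.mul_left c2

end AuxCommOrderSuper

/-- For a finite group `G`, the commuting graph equals the order super commuting graph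
iff `G` is abelian. -/
theorem commutingGraph_eq_orderSuper_iff_comm (G : Type*) [Group G] [Fintype G] :
    commutingGraph G = orderSuper G (commutingGraph G) ↔ ∀ a b : G, a * b = b * a := by
  constructor
  · intro h a b
    exact comm_all' h (orderOf a * orderOf b) a b le_rfl
  · intro h
    ext x y
    rw [commutingGraph_adj']
    rw [orderSuper, SimpleGraph.fromRel_adj]
    constructor
    · rintro ⟨hne, -⟩
      refine ⟨hne, Or.inl (Or.inr ⟨x, y, rfl, rfl, ?_⟩)⟩
      rw [commutingGraph_adj']
      exact ⟨hne, h x y⟩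
    · rintro ⟨hne, -⟩
      exact ⟨hne, h x y⟩
end

section
/- Let G be a finite group and let x, y ∈ G be distinct. Then x and y are adjacent in the order super commuting graph Δ^o(G) if and only if there exists z ∈ G with o(z) = lcm(o(x), o(y)). -/
/-- Adjacency in the order super commuting graph: distinct `x, y` are adjacent iff there
is an element whose order is `lcm (orderOf x) (orderOf y)`. -/
theorem orderSuper_commutingGraph_adj_iff {G : Type*} [Group G] [Fintype G]
    (x y : G) (hxy : x ≠ y) :
    (orderSuper G (commutingGraph G)).Adj x y ↔
      ∃ z : G, orderOf z = Nat.lcm (orderOf x) (orderOf y) := by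
  have key : ∀ w : G, ∀ a : ℕ, a ∣ orderOf w → orderOf (w ^ (orderOf w / a)) = a := by
    intro w a ha
    rw [orderOf_pow, Nat.gcd_eq_right (Nat.div_dvd_of_dvd ha),
      Nat.div_div_self ha (orderOf_pos w).ne']
  constructor
  · rintro ⟨hne, h | h⟩
    · rcases h with h | ⟨x', y', hx', hy', -, h | h⟩
      · exact ⟨x, by rw [h, Nat.lcm_self]⟩
      · obtain ⟨z, -, hz⟩ := Commute.exists_orderOf_eq_lcm _ h
        exact ⟨z, by rw [hz, hx', hy']⟩
      · obtain ⟨z, -, hz⟩ := Commute.exists_orderOf_eq_lcm _ h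
        exact ⟨z, by rw [hz, hy', hx', Nat.lcm_comm]⟩
    · rcases h with h | ⟨x', y', hx', hy', -, h | h⟩
      · exact ⟨x, by rw [← h, Nat.lcm_self]⟩
      · obtain ⟨z, -, hz⟩ := Commute.exists_orderOf_eq_lcm _ h
        exact ⟨z, by rw [hz, hx', hy', Nat.lcm_comm]⟩
      · obtain ⟨z, -, hz⟩ := Commute.exists_orderOf_eq_lcm _ h
        exact ⟨z, by rw [hz, hy', hx']⟩
  · rintro ⟨z, hz⟩
    by_cases heq : orderOf x = orderOf y
    · exact ⟨hxy, Or.inl (Or.inl heq)⟩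
    have hox : orderOf (z ^ (orderOf z / orderOf x)) = orderOf x :=
      key z _ (hz ▸ Nat.dvd_lcm_left _ _)
    have hoy : orderOf (z ^ (orderOf z / orderOf y)) = orderOf y :=
      key z _ (hz ▸ Nat.dvd_lcm_right _ _)
    refine ⟨hxy, Or.inl (Or.inr ⟨_, _, hox, hoy, ⟨fun he => heq ?_, Or.inl (Commute.pow_pow_self z _ _)⟩⟩)⟩
    rw [← hox, he, hoy]
end

section
/- Let G be a finite group and x ∈ G. Then x is a dominant vertex of the order super commuting graph Δ^o(G) if and only if o(x) divides o(y) for every y ∈ G whose order is maximal with respect to divisibility among the orders of elements of G (i.e., for every y such that for all z ∈ G, o(y) ∣ o(z) implies o(z) = o(y)). -/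
/-- `x` is a dominant vertex of the order super commuting graph iff `orderOf x` divides
the order of every element whose order is maximal with respect to divisibility. -/
theorem isDominantVertex_orderSuper_commutingGraph_iff {G : Type*} [Group G] [Fintype G]
    (x : G) :
    IsDominantVertex (orderSuper G (commutingGraph G)) x ↔
      ∀ y : G, (∀ z : G, orderOf y ∣ orderOf z → orderOf z = orderOf y) →
        orderOf x ∣ orderOf y := by
  constructor
  · intro h y hy
    rcases eq_or_ne y x with rfl | hyx
    · exact dvd_refl _
    have hadj := h y hyx
    rw [orderSuper, SimpleGraph.fromRel_adj] at hadj
    obtain ⟨-, hrel⟩ := hadj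
    have key : orderOf x = orderOf y ∨ ∃ x' y' : G, orderOf x' = orderOf x ∧
        orderOf y' = orderOf y ∧ Commute x' y' := by
      rcases hrel with (h1 | ⟨x', y', hx', hy', ha⟩) | (h1 | ⟨x', y', hx', hy', ha⟩)
      · exact Or.inl h1
      · rw [commutingGraph, SimpleGraph.fromRel_adj] at ha
        exact Or.inr ⟨x', y', hx', hy',
          by rcases ha.2 with h2 | h2 <;> simp [Commute, SemiconjBy, h2]⟩
      · exact Or.inl h1.symm
      · rw [commutingGraph, SimpleGraph.fromRel_adj] at ha
        exact Or.inr ⟨y', x', hy', hx',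
          by rcases ha.2 with h2 | h2 <;> simp [Commute, SemiconjBy, h2]⟩
    rcases key with h1 | ⟨x', y', hx', hy', hc⟩
    · exact h1.dvd
    obtain ⟨z, -, hz⟩ := hc.exists_orderOf_eq_lcm
    rw [hx', hy'] at hz
    have hyz : orderOf y ∣ orderOf z := hz ▸ Nat.dvd_lcm_right _ _
    have := hy z hyz
    calc orderOf x ∣ orderOf z := hz ▸ Nat.dvd_lcm_left _ _
      _ = orderOf y := this
  · intro h w hw
    -- find a divisibility-maximal y with orderOf w ∣ orderOf y
    obtain ⟨y, hy_mem, hy_max⟩ := Finset.exists_max_image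
      (Finset.univ.filter fun z : G => orderOf w ∣ orderOf z) orderOf
      ⟨w, by simp⟩
    have hwy : orderOf w ∣ orderOf y := (Finset.mem_filter.mp hy_mem).2
    have hymax : ∀ z : G, orderOf y ∣ orderOf z → orderOf z = orderOf y := by
      intro z hdz
      have hz_mem : z ∈ Finset.univ.filter fun z : G => orderOf w ∣ orderOf z := by
        simp [hwy.trans hdz]
      exact le_antisymm (hy_max z hz_mem) (Nat.le_of_dvd (orderOf_pos z) hdz)
    have hxy : orderOf x ∣ orderOf y := h y hymax
    rw [orderSuper, SimpleGraph.fromRel_adj]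
    refine ⟨fun e => hw e.symm, Or.inl ?_⟩
    by_cases hxw : orderOf x = orderOf w
    · exact Or.inl hxw
    · refine Or.inr ⟨y ^ (orderOf y / orderOf x), y ^ (orderOf y / orderOf w), ?_, ?_, ?_⟩
      · exact orderOf_pow_orderOf_div (orderOf_pos y).ne' hxy
      · exact orderOf_pow_orderOf_div (orderOf_pos y).ne' hwy
      · rw [commutingGraph, SimpleGraph.fromRel_adj]
        refine ⟨?_, Or.inl (Commute.pow_pow_self y _ _)⟩
        intro hEq
        apply hxw
        rw [← orderOf_pow_orderOf_div (orderOf_pos y).ne' hxy, hEq,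
          orderOf_pow_orderOf_div (orderOf_pos y).ne' hwy]
end

section
/- Let n ≥ 4 and let T be a nonempty subset of the set π_n of primes at most n such that Σ_{p∈T} p ≤ n. Then there exists a nonempty subset T' of π_n \ T such that Σ_{p∈T'} p ≤ n and Σ_{p∈T} p + Σ_{p∈T'} p > n. -/
/-!
Write `S = ∑ p ∈ T, p`; it suffices to find primes outside `T` whose sum lies in `(n - S, n]`.
If the subset sums of a finite set `s ⊆ ℕ` meet every window `(x, x + g]` below `∑ s`, this
survives adding a new largest element `a ≤ ∑ s + g`. By Bertrand's postulate the primes below a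
prime `q ≥ 5` sum to at least `q`, so for `S ≥ 3` the primes outside `T` can be added one by one
with `g = S`. The case `T = {2}` asks for windows of length `2` in the subset sums of the odd
primes; these fail at both ends (`(0, 2]`, and symmetrically near the total), so there the
induction keeps a margin at each end and starts from `{3, 5, 7}`.
-/

open Finset Nat

def SubsetSumsMeetWindows (A : Finset ℕ) (g lo r : ℕ) : Prop :=
  ∀ x, lo ≤ x → x + r < ∑ a ∈ A, a → ∃ V ⊆ A, x < ∑ v ∈ V, v ∧ ∑ v ∈ V, v ≤ x + g

theorem subsetSumsMeetWindows_insert {s : Finset ℕ} {a g lo r : ℕ}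
    (h : SubsetSumsMeetWindows s g lo r) (ha : a ∉ s) (hag : a + r ≤ ∑ b ∈ s, b + g)
    (hlo : lo = 0 ∨ lo + a + r ≤ ∑ b ∈ s, b) :
    SubsetSumsMeetWindows (insert a s) g lo r := by
  intro x hlox hx
  rw [sum_insert ha] at hx
  by_cases hxs : x + r < ∑ b ∈ s, b
  · obtain ⟨V, hVs, hV⟩ := h x hlox hxs
    exact ⟨V, hVs.trans (subset_insert a s), hV⟩
  by_cases hxa : x < a
  · exact ⟨{a}, by simp, by rw [sum_singleton]; omega⟩
  obtain ⟨V, hVs, hV⟩ := h (x - a) (by omega) (by omega)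
  refine ⟨insert a V, insert_subset_insert a hVs, ?_⟩
  rw [sum_insert fun haV => ha (hVs haV)]
  omega

theorem subsetSumsMeetWindows_filter_range {P : ℕ → Prop} [DecidablePred P] {g lo r n₀ : ℕ}
    (h₀ : SubsetSumsMeetWindows {p ∈ range n₀ | P p} g lo r)
    (hstep : ∀ a, n₀ ≤ a → P a → a + r ≤ ∑ b ∈ {b ∈ range a | P b}, b + g ∧
      (lo = 0 ∨ lo + a + r ≤ ∑ b ∈ {b ∈ range a | P b}, b))
    (n : ℕ) (hn : n₀ ≤ n) : SubsetSumsMeetWindows {p ∈ range n | P p} g lo r := by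
  induction n, hn using Nat.le_induction with
  | base => exact h₀
  | succ n hn ih =>
    rw [range_add_one, filter_insert]
    split_ifs with hP
    · exact subsetSumsMeetWindows_insert ih (by simp) (hstep n hn hP).1 (hstep n hn hP).2
    · exact ih

theorem primesBelow_succ_of_prime {p : ℕ} (hp : p.Prime) :
    primesBelow (p + 1) = insert p (primesBelow p) := by
  rw [primesBelow_succ, if_pos hp]

theorem add_six_le_sum_primesBelow (n : ℕ) (hn : 8 ≤ n) : n + 6 ≤ ∑ p ∈ primesBelow n, p := by
  induction n using Nat.strong_induction_on with
  | _ n ih =>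
  by_cases hsmall : n < 15
  · interval_cases n <;> decide
  obtain ⟨p, hp, hlt, hle⟩ := exists_prime_lt_and_le_two_mul ((n - 1) / 2) (by omega)
  have hrec := ih p (by omega) (by omega)
  have hsub : insert p (primesBelow p) ⊆ primesBelow n := by
    rw [← primesBelow_succ_of_prime hp]
    exact primesBelow_mono (by omega)
  have hsum := sum_le_sum_of_subset (f := fun q => q) hsub
  rw [sum_insert (notMem_primesBelow p)] at hsum
  omega

theorem le_sum_primesBelow {p : ℕ} (hp : p.Prime) (h5 : 5 ≤ p) : p ≤ ∑ q ∈ primesBelow p, q := by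
  by_cases h8 : p < 8
  · interval_cases p <;> decide
  · have := add_six_le_sum_primesBelow p (by omega)
    omega

theorem sum_primesBelow_le_sum_sdiff_add (n : ℕ) (T : Finset ℕ) :
    ∑ p ∈ primesBelow n, p ≤ ∑ p ∈ primesBelow n \ T, p + ∑ p ∈ T, p := by
  rw [← sum_sdiff (inter_subset_left (s₁ := primesBelow n) (s₂ := T)), sdiff_inter_self_left]
  exact Nat.add_le_add_left (sum_le_sum_of_subset inter_subset_right) _

theorem primesBelow_sdiff_eq_filter (n : ℕ) (T : Finset ℕ) :
    primesBelow n \ T = {p ∈ range n | p.Prime ∧ p ∉ T} := by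
  ext p
  simp [mem_primesBelow, and_assoc]

theorem subsetSumsMeetWindows_primesBelow_sdiff {T : Finset ℕ} (hT : 3 ≤ ∑ p ∈ T, p) (n : ℕ) :
    SubsetSumsMeetWindows (primesBelow n \ T) (∑ p ∈ T, p) 0 0 := by
  rw [primesBelow_sdiff_eq_filter]
  refine subsetSumsMeetWindows_filter_range (n₀ := 0) (fun x _ hx => by simp at hx) ?_ n n.zero_le
  rintro a - ⟨ha, -⟩
  rw [← primesBelow_sdiff_eq_filter]
  refine ⟨?_, Or.inl rfl⟩
  have := sum_primesBelow_le_sum_sdiff_add a T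
  by_cases h5 : 5 ≤ a
  · have := le_sum_primesBelow ha h5
    omega
  · interval_cases a <;> first | omega | exact absurd ha (by decide)

theorem subsetSumsMeetWindows_primesBelow_sdiff_two {n : ℕ} (hn : 8 ≤ n) :
    SubsetSumsMeetWindows (primesBelow n \ {2}) 2 1 3 := by
  rw [primesBelow_sdiff_eq_filter]
  refine subsetSumsMeetWindows_filter_range (n₀ := 8) ?_ ?_ n hn
  · rw [← primesBelow_sdiff_eq_filter, show primesBelow 8 \ {2} = {3, 5, 7} by decide]
    intro x hx1 hx
    have : ∀ x < 12, 1 ≤ x → ∃ V ∈ ({3, 5, 7} : Finset ℕ).powerset,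
        x < ∑ v ∈ V, v ∧ ∑ v ∈ V, v ≤ x + 2 := by decide
    obtain ⟨V, hV, hVx⟩ := this x (by simp at hx; omega) hx1
    exact ⟨V, mem_powerset.mp hV, hVx⟩
  · intro a ha _
    rw [← primesBelow_sdiff_eq_filter]
    have := sum_primesBelow_le_sum_sdiff_add a {2}
    have := add_six_le_sum_primesBelow a ha
    rw [sum_singleton] at *
    omega

theorem eq_singleton_two_of_sum_lt_three {T : Finset ℕ} (hT : T.Nonempty)
    (hTprime : ∀ p ∈ T, p.Prime) (hTsum : ∑ p ∈ T, p < 3) : T = {2} := by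
  refine (hT.subset_singleton_iff).1 fun p hp => mem_singleton.2 ?_
  have := (hTprime p hp).two_le
  have := single_le_sum (fun q _ => Nat.zero_le q) hp
  omega

/-- For `n ≥ 4` and a nonempty set `T` of primes at most `n` with sum at most `n`, there
is a nonempty set `T'` of primes at most `n`, disjoint from `T`, with sum at most `n`,
such that the two sums together exceed `n`. -/
theorem exists_disjoint_prime_subset_sum (n : ℕ) (hn : 4 ≤ n) (T : Finset ℕ)
    (hT : T.Nonempty) (hTprime : ∀ p ∈ T, p.Prime ∧ p ≤ n) (hTsum : ∑ p ∈ T, p ≤ n) :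
    ∃ T' : Finset ℕ, T'.Nonempty ∧ (∀ p ∈ T', p.Prime ∧ p ≤ n) ∧ Disjoint T T' ∧
      (∑ p ∈ T', p) ≤ n ∧ n < (∑ p ∈ T, p) + ∑ p ∈ T', p := by
  -- A subset sum `≤ n` only uses primes `≤ n`, so any cutoff above `n` will do.
  have hbig : n + 14 ≤ ∑ p ∈ primesBelow (n + 8), p := add_six_le_sum_primesBelow _ (by omega)
  have hsdiff := sum_primesBelow_le_sum_sdiff_add (n + 8) T
  obtain ⟨V, hV, hlt, hle⟩ : ∃ V ⊆ primesBelow (n + 8) \ T,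
      n < ∑ p ∈ T, p + ∑ p ∈ V, p ∧ ∑ p ∈ V, p ≤ n := by
    rcases le_or_gt 3 (∑ p ∈ T, p) with h3 | h2
    · obtain ⟨V, hV, hVx⟩ := subsetSumsMeetWindows_primesBelow_sdiff h3 (n + 8) (n - ∑ p ∈ T, p)
        (Nat.zero_le _) (by omega)
      exact ⟨V, hV, by omega, by omega⟩
    · obtain rfl : T = {2} := eq_singleton_two_of_sum_lt_three hT (fun p hp => (hTprime p hp).1) h2
      obtain ⟨V, hV, hVx⟩ := subsetSumsMeetWindows_primesBelow_sdiff_two (n := n + 8) (by omega)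
        (n - 2) (by omega) (by rw [sum_singleton] at *; omega)
      exact ⟨V, hV, by rw [sum_singleton]; omega, by omega⟩
  have hVle : ∀ p ∈ V, p ≤ n := fun p hp => (single_le_sum (fun _ _ => Nat.zero_le _) hp).trans hle
  refine ⟨V, nonempty_iff_ne_empty.2 ?_, fun p hp => ⟨?_, hVle p hp⟩, ?_, hle, hlt⟩
  · rintro rfl
    rw [sum_empty] at hlt
    omega
  · exact prime_of_mem_primesBelow (mem_sdiff.1 (hV hp)).1
  · exact disjoint_right.2 fun p hp => (mem_sdiff.1 (hV hp)).2
end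

section
/- For n ≥ 4, the set of dominant vertices of the order super commuting graph Δ^o(S_n) of the symmetric group S_n is exactly {e}; that is, a permutation σ ∈ S_n is a dominant vertex of Δ^o(S_n) if and only if σ is the identity. -/
/-!
A permutation of order `k ≠ 0` moves at least `ordProjSum k` points, the sum of the maximal
prime powers dividing `k`, and this bound is attained. Commuting elements of orders `a` and `b`
generate an element of order `lcm a b`, so a permutation `σ ≠ 1` of order `m` is not adjacent to
any permutation whose order `k` satisfies `k ≠ m` and `n < ordProjSum (lcm m k)`.
Such a `k` is found by induction on `n`, splitting off a Bertrand prime `q ∈ (n/2, n]`; for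
`m = 2` it must be odd with `ordProjSum k ≥ n - 1`, which is a form of Richert's theorem that
every integer greater than `6` is a sum of distinct primes.
-/

def ordProjSum (k : ℕ) : ℕ := ∑ p ∈ k.primeFactors, ordProj[p] k

@[simp] lemma ordProjSum_zero : ordProjSum 0 = 0 := by simp [ordProjSum]

@[simp] lemma ordProjSum_one : ordProjSum 1 = 0 := by simp [ordProjSum]

lemma ordProjSum_prime_pow {p a : ℕ} (hp : p.Prime) (ha : a ≠ 0) :
    ordProjSum (p ^ a) = p ^ a := by
  simp [ordProjSum, Nat.primeFactors_prime_pow ha hp, hp.factorization_pow]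

lemma ordProjSum_prime {p : ℕ} (hp : p.Prime) : ordProjSum p = p := by
  simpa using ordProjSum_prime_pow hp one_ne_zero

lemma ordProjSum_mul_of_coprime {a b : ℕ} (hab : a.Coprime b) :
    ordProjSum (a * b) = ordProjSum a + ordProjSum b := by
  have term {a b p : ℕ} (hab : a.Coprime b) (hp : p ∈ a.primeFactors) :
      ordProj[p] (a * b) = ordProj[p] a := by
    have hpb : p ∉ b.primeFactors := Finset.disjoint_left.1 hab.disjoint_primeFactors hp
    have hbp : b.factorization p = 0 :=
      Finsupp.notMem_support_iff.1 (by rwa [Nat.support_factorization])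
    rw [Nat.factorization_mul_of_coprime hab, Finsupp.add_apply, hbp, add_zero]
  rw [ordProjSum, hab.primeFactors_mul, Finset.sum_union hab.disjoint_primeFactors]
  refine congrArg₂ (· + ·) (Finset.sum_congr rfl fun p hp => term hab hp)
    (Finset.sum_congr rfl fun p hp => ?_)
  rw [mul_comm]
  exact term hab.symm hp

lemma ordProjSum_le_of_dvd {a b : ℕ} (h : a ∣ b) (hb : b ≠ 0) :
    ordProjSum a ≤ ordProjSum b := by
  have ha : a ≠ 0 := ne_zero_of_dvd_ne_zero hb h
  calc ordProjSum a ≤ ∑ p ∈ a.primeFactors, ordProj[p] b :=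
        Finset.sum_le_sum fun p hp => Nat.pow_le_pow_right (Nat.prime_of_mem_primeFactors hp).pos
          ((Nat.factorization_le_iff_dvd ha hb).2 h p)
    _ ≤ ordProjSum b := Finset.sum_le_sum_of_subset (Nat.primeFactors_mono h hb)

lemma ordProjSum_le_self (k : ℕ) : ordProjSum k ≤ k := by
  induction k using Nat.recOnPosPrimePosCoprime with
  | prime_pow p a hp ha => exact (ordProjSum_prime_pow hp ha.ne').le
  | zero => simp
  | one => simp
  | coprime a b ha hb hab iha ihb =>
    rw [ordProjSum_mul_of_coprime hab]
    exact (add_le_add iha ihb).trans (add_le_mul ha hb)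

lemma ordProjSum_lcm_le (a b : ℕ) : ordProjSum (a.lcm b) ≤ ordProjSum a + ordProjSum b := by
  rcases eq_or_ne a 0 with rfl | ha
  · simp
  rcases eq_or_ne b 0 with rfl | hb
  · simp
  rw [← Nat.factorizationLCMLeft_mul_factorizationLCMRight ha hb,
    ordProjSum_mul_of_coprime (Nat.coprime_factorizationLCMLeft_factorizationLCMRight a b)]
  exact add_le_add (ordProjSum_le_of_dvd (Nat.factorizationLCMLeft_dvd_left a b) ha)
    (ordProjSum_le_of_dvd (Nat.factorizationLCMRight_dvd_right a b) hb)

lemma ordProjSum_multiset_lcm_le_sum (M : Multiset ℕ) : ordProjSum M.lcm ≤ M.sum := by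
  induction M using Multiset.induction_on with
  | empty => simp
  | cons a M ih =>
    rw [Multiset.lcm_cons, Multiset.sum_cons]
    exact (ordProjSum_lcm_le a M.lcm).trans (add_le_add (ordProjSum_le_self a) ih)

lemma ordProjSum_prod_primes {F : Finset ℕ} (hF : ∀ p ∈ F, p.Prime) :
    ordProjSum (∏ p ∈ F, p) = ∑ p ∈ F, p := by
  induction F using Finset.induction_on with
  | empty => simp
  | insert q F hqF ih =>
    have hq : q.Prime := hF q (Finset.mem_insert_self q F)
    have hprime : ∀ p ∈ F, p.Prime := fun p hp => hF p (Finset.mem_insert_of_mem hp)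
    have hcop : q.Coprime (∏ p ∈ F, p) := Nat.Coprime.prod_right fun p hp =>
      (Nat.coprime_primes hq (hprime p hp)).2 (ne_of_mem_of_not_mem hp hqF).symm
    rw [Finset.prod_insert hqF, Finset.sum_insert hqF, ordProjSum_mul_of_coprime hcop,
      ordProjSum_prime hq, ih hprime]

lemma two_le_ordProjSum {m : ℕ} (hm : 2 ≤ m) : 2 ≤ ordProjSum m := by
  have hp := Nat.minFac_prime (by omega : m ≠ 1)
  calc 2 ≤ m.minFac := hp.two_le
    _ = ordProjSum m.minFac := (ordProjSum_prime hp).symm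
    _ ≤ ordProjSum m := ordProjSum_le_of_dvd m.minFac_dvd (by omega)

lemma four_le_ordProjSum_of_even {m : ℕ} (hm : 3 ≤ m) (h2 : 2 ∣ m) : 4 ≤ ordProjSum m := by
  obtain ⟨e, t, ht, rfl⟩ := Nat.exists_eq_pow_mul_and_not_dvd (by omega : m ≠ 0) 2 (by norm_num)
  have he : e ≠ 0 := by
    rintro rfl
    exact ht (by simpa using h2)
  have ht0 : t ≠ 0 := by rintro rfl; simp at hm
  rw [ordProjSum_mul_of_coprime (Nat.Coprime.pow_left e (Nat.prime_two.coprime_iff_not_dvd.2 ht)),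
    ordProjSum_prime_pow Nat.prime_two he]
  rcases eq_or_ne t 1 with rfl | ht1
  · simp only [mul_one] at hm
    simp only [ordProjSum_one, add_zero]
    omega
  · have := two_le_ordProjSum (by omega : 2 ≤ t)
    have := Nat.one_lt_two_pow he
    omega

lemma add_ordProjSum_lcm_le_ordProjSum_lcm_mul {m k q : ℕ} (hq : q.Prime) (hqm : ¬ q ∣ m)
    (hqk : ¬ q ∣ k) (hm : m ≠ 0) (hk : k ≠ 0) :
    q + ordProjSum (m.lcm k) ≤ ordProjSum (m.lcm (q * k)) := by
  have hcop : q.Coprime (m.lcm k) :=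
    Nat.Coprime.coprime_dvd_right (Nat.lcm_dvd_mul m k)
      (Nat.Coprime.mul_right (hq.coprime_iff_not_dvd.2 hqm) (hq.coprime_iff_not_dvd.2 hqk))
  have hdvd : q * m.lcm k ∣ m.lcm (q * k) :=
    hcop.mul_dvd_of_dvd_of_dvd ((dvd_mul_right q k).trans (Nat.dvd_lcm_right m _))
      (Nat.lcm_dvd (Nat.dvd_lcm_left m _) ((dvd_mul_left k q).trans (Nat.dvd_lcm_right m _)))
  calc q + ordProjSum (m.lcm k) = ordProjSum (q * m.lcm k) := by
        rw [ordProjSum_mul_of_coprime hcop, ordProjSum_prime hq]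
    _ ≤ ordProjSum (m.lcm (q * k)) :=
        ordProjSum_le_of_dvd hdvd (Nat.lcm_ne_zero hm (mul_ne_zero hq.ne_zero hk))

lemma exists_ordProjSum_lt_ordProjSum_lcm_of_prime_dvd {m n q : ℕ} (hm : m ≠ 0) (hq : q.Prime)
    (hq2 : q ≠ 2) (hqm : q ∣ m) (hqn : n < 2 * q) (hmn : ordProjSum m ≤ n) :
    ∃ k, ordProjSum k ≤ n ∧ k ≠ m ∧ n < ordProjSum (m.lcm k) := by
  have hqn' : q ≤ n := (ordProjSum_prime hq ▸ ordProjSum_le_of_dvd hqm hm).trans hmn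
  set b := Nat.log 2 n
  have hb : b ≠ 0 := (Nat.log_pos (by norm_num) (by have := hq.two_le; omega)).ne'
  have hbn : 2 ^ b ≤ n := Nat.pow_log_le_self 2 (by omega)
  have hnb : n < 2 * 2 ^ b := pow_succ' 2 b ▸ Nat.lt_pow_succ_log_self (by norm_num) n
  have hcop : q.Coprime (2 ^ b) :=
    Nat.Coprime.pow_right b ((Nat.coprime_primes hq Nat.prime_two).2 hq2)
  refine ⟨2 ^ b, by rwa [ordProjSum_prime_pow Nat.prime_two hb], ?_, ?_⟩
  · rintro h
    exact hq2 ((Nat.prime_dvd_prime_iff_eq hq Nat.prime_two).1 (hq.dvd_of_dvd_pow (h ▸ hqm)))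
  · have hdvd : q * 2 ^ b ∣ m.lcm (2 ^ b) :=
      hcop.mul_dvd_of_dvd_of_dvd (hqm.trans (Nat.dvd_lcm_left _ _)) (Nat.dvd_lcm_right _ _)
    have := ordProjSum_le_of_dvd hdvd (Nat.lcm_ne_zero hm (by positivity))
    rw [ordProjSum_mul_of_coprime hcop, ordProjSum_prime hq,
      ordProjSum_prime_pow Nat.prime_two hb] at this
    omega

lemma exists_ordProjSum_lt_ordProjSum_lcm_of_three_le {m : ℕ} (hm : 3 ≤ m) (n : ℕ)
    (hmn : ordProjSum m ≤ n) : ∃ k, ordProjSum k ≤ n ∧ k ≠ m ∧ n < ordProjSum (m.lcm k) := by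
  induction n using Nat.strong_induction_on with
  | _ n ih =>
      have hn : 2 ≤ n := (two_le_ordProjSum (by omega)).trans hmn
      obtain ⟨q, hq, hnq, hqn⟩ := Nat.exists_prime_lt_and_le_two_mul (n / 2) (by omega)
      by_cases hqm : q ∣ m
      · have hq2 : q ≠ 2 := by
          rintro rfl
          have := four_le_ordProjSum_of_even hm hqm
          omega
        exact exists_ordProjSum_lt_ordProjSum_lcm_of_prime_dvd (by omega) hq hq2 hqm (by omega) hmn
      obtain ⟨k, hkn, hkm, hk⟩ :
          ∃ k, ordProjSum k ≤ n - q ∧ k ≠ m ∧ n - q < ordProjSum (m.lcm k) := by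
        by_cases hfit : n < ordProjSum m + q
        · exact ⟨1, by simp, by omega, by rw [Nat.lcm_one_right]; omega⟩
        · exact ih (n - q) (by omega) (by omega)
      have hk0 : k ≠ 0 := by rintro rfl; simp at hk
      have hqk : ¬ q ∣ k := fun h => by
        have := ordProjSum_prime hq ▸ ordProjSum_le_of_dvd h hk0
        omega
      refine ⟨q * k, ?_, fun h => hqm (h ▸ dvd_mul_right q k), ?_⟩
      · rw [ordProjSum_mul_of_coprime (hq.coprime_iff_not_dvd.2 hqk), ordProjSum_prime hq]
        omega
      · have := add_ordProjSum_lcm_le_ordProjSum_lcm_mul hq hqm hqk (by omega) hk0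
        omega

lemma exists_oddPrimes_lt_twentyThree_sum_near :
    ∀ s ∈ Finset.Icc 3 32, ∃ F ∈ ({3, 5, 7, 11, 13, 17, 19} : Finset ℕ).powerset,
      s ≤ ∑ p ∈ F, p + 1 ∧ ∑ p ∈ F, p ≤ s := by
  decide

lemma exists_oddPrimes_lt_sum_near {q : ℕ} (hq : q.Prime) (hq23 : 23 ≤ q) {s : ℕ} (hs : 3 ≤ s)
    (hsq : s ≤ q + 9) :
    ∃ F : Finset ℕ, (∀ p ∈ F, p.Prime ∧ p ≠ 2 ∧ p < q) ∧ s ≤ ∑ p ∈ F, p + 1 ∧ ∑ p ∈ F, p ≤ s := by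
  induction q using Nat.strong_induction_on generalizing s with
  | _ q ih =>
      rcases hq23.eq_or_lt with rfl | hq23
      · obtain ⟨F, hF, hsum⟩ := exists_oddPrimes_lt_twentyThree_sum_near s
          (Finset.mem_Icc.2 ⟨hs, by omega⟩)
        refine ⟨F, fun p hp => ?_, hsum⟩
        have := Finset.mem_powerset.1 hF hp
        fin_cases this <;> norm_num
      -- `[3, q + 9] ⊆ [3, r + 9] ∪ (r + [10, r + 9])`, and `r` exceeds every prime used below.
      obtain ⟨r, hr, hr23, hrq, hqr⟩ : ∃ r, r.Prime ∧ 23 ≤ r ∧ r < q ∧ q ≤ 2 * r := by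
        by_cases hq46 : q ≤ 46
        · exact ⟨23, by norm_num, le_rfl, hq23, by omega⟩
        · obtain ⟨r, hr, h1, h2⟩ := Nat.exists_prime_lt_and_le_two_mul ((q - 1) / 2) (by omega)
          exact ⟨r, hr, by omega, by omega, by omega⟩
      by_cases hsr : s ≤ r + 9
      · obtain ⟨F, hF, hsum⟩ := ih r hrq hr hr23 hs hsr
        exact ⟨F, fun p hp => ⟨(hF p hp).1, (hF p hp).2.1, (hF p hp).2.2.trans hrq⟩, hsum⟩
      obtain ⟨F, hF, hsum⟩ := ih r hrq hr hr23 (s := s - r) (by omega) (by omega)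
      have hrF : r ∉ F := fun h => (hF r h).2.2.false
      refine ⟨insert r F, ?_, ?_⟩
      · simp only [Finset.mem_insert, forall_eq_or_imp]
        exact ⟨⟨hr, by omega, hrq⟩,
          fun p hp => ⟨(hF p hp).1, (hF p hp).2.1, (hF p hp).2.2.trans hrq⟩⟩
      · rw [Finset.sum_insert hrF]
        omega

lemma exists_oddPrimes_sum_near {s : ℕ} (hs : 3 ≤ s) :
    ∃ F : Finset ℕ, (∀ p ∈ F, p.Prime ∧ p ≠ 2) ∧ s ≤ ∑ p ∈ F, p + 1 ∧ ∑ p ∈ F, p ≤ s := by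
  obtain ⟨q, hqs, hq⟩ := Nat.exists_infinite_primes (max 23 s)
  obtain ⟨F, hF, hsum⟩ := exists_oddPrimes_lt_sum_near hq (by omega) hs (by omega)
  exact ⟨F, fun p hp => ⟨(hF p hp).1, (hF p hp).2.1⟩, hsum⟩

lemma exists_ordProjSum_lt_ordProjSum_lcm_two {n : ℕ} (hn : 3 ≤ n) :
    ∃ k, ordProjSum k ≤ n ∧ k ≠ 2 ∧ n < ordProjSum (Nat.lcm 2 k) := by
  obtain ⟨F, hF, hsum⟩ := exists_oddPrimes_sum_near hn
  have hk := ordProjSum_prod_primes fun p hp => (hF p hp).1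
  have hcop : Nat.Coprime 2 (∏ p ∈ F, p) := Nat.Coprime.prod_right fun p hp =>
    (Nat.coprime_primes Nat.prime_two (hF p hp).1).2 (hF p hp).2.symm
  refine ⟨∏ p ∈ F, p, by omega, fun h => ?_, ?_⟩
  · simp [h] at hcop
  · rw [hcop.lcm_eq_mul, ordProjSum_mul_of_coprime hcop, ordProjSum_prime Nat.prime_two, hk]
    omega

lemma exists_ordProjSum_lt_ordProjSum_lcm {m n : ℕ} (hn : 3 ≤ n) (hm : 2 ≤ m)
    (hmn : ordProjSum m ≤ n) : ∃ k, ordProjSum k ≤ n ∧ k ≠ m ∧ n < ordProjSum (m.lcm k) := by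
  rcases hm.eq_or_lt with rfl | hm
  · exact exists_ordProjSum_lt_ordProjSum_lcm_two hn
  · exact exists_ordProjSum_lt_ordProjSum_lcm_of_three_le hm n hmn

section Perm

variable {α : Type*} [Fintype α] [DecidableEq α]

open Equiv

lemma ordProjSum_orderOf_le (σ : Perm α) : ordProjSum (orderOf σ) ≤ Fintype.card α := by
  rw [← Perm.lcm_cycleType]
  exact (ordProjSum_multiset_lcm_le_sum _).trans
    (σ.sum_cycleType ▸ σ.support.card_le_univ)

lemma exists_perm_orderOf_eq {k : ℕ} (hk : k ≠ 0) (h : ordProjSum k ≤ Fintype.card α) :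
    ∃ σ : Perm α, orderOf σ = k := by
  set M := k.primeFactors.val.map fun p => ordProj[p] k
  have two_le : ∀ c ∈ M, 2 ≤ c := by
    simp only [M, Multiset.mem_map, Finset.mem_val, forall_exists_index, and_imp]
    rintro _ p hp rfl
    exact (Nat.prime_of_mem_primeFactors hp).two_le.trans
      (Nat.le_self_pow (Nat.support_factorization k ▸ hp |> Finsupp.mem_support_iff.1) p)
  obtain ⟨σ, hσ⟩ := (Perm.exists_with_cycleType_iff α).2 ⟨by simpa [M, ordProjSum] using h, two_le⟩
  refine ⟨σ, ?_⟩
  rw [← Perm.lcm_cycleType, hσ, ← Finset.lcm_def, Finset.lcm_eq_prod]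
  · exact Nat.prod_factorization_pow_eq_self hk
  · intro p hp q hq hpq
    exact Nat.coprime_pow_primes _ _ (Nat.prime_of_mem_primeFactors hp)
      (Nat.prime_of_mem_primeFactors hq) hpq

end Perm

lemma commute_of_commutingGraph_adj {G : Type*} [Group G] {x y : G}
    (h : (commutingGraph G).Adj x y) : Commute x y := by
  rcases ((SimpleGraph.fromRel_adj _ _ _).1 h).2 with h | h
  exacts [h, h.symm]

lemma orderOf_eq_or_exists_orderOf_eq_lcm_of_adj {G : Type*} [Group G] {x y : G}
    (h : (orderSuper G (commutingGraph G)).Adj x y) :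
    orderOf x = orderOf y ∨ ∃ z : G, orderOf z = (orderOf x).lcm (orderOf y) := by
  rw [orderSuper, SimpleGraph.fromRel_adj] at h
  rcases h.2 with (h | ⟨x', y', hx, hy, hxy⟩) | (h | ⟨y', x', hy, hx, hxy⟩)
  · exact .inl h
  · obtain ⟨z, -, hz⟩ := (commute_of_commutingGraph_adj hxy).exists_orderOf_eq_lcm
    exact .inr ⟨z, by rw [hz, hx, hy]⟩
  · exact .inl h.symm
  · obtain ⟨z, -, hz⟩ := (commute_of_commutingGraph_adj hxy).exists_orderOf_eq_lcm
    exact .inr ⟨z, by rw [hz, hx, hy, Nat.lcm_comm]⟩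

lemma isDominantVertex_one_orderSuper_commutingGraph (G : Type*) [Group G] :
    IsDominantVertex (orderSuper G (commutingGraph G)) 1 := by
  intro w hw
  rw [orderSuper, SimpleGraph.fromRel_adj]
  refine ⟨hw.symm, .inl (.inr ⟨1, w, rfl, rfl, ?_⟩)⟩
  rw [commutingGraph, SimpleGraph.fromRel_adj]
  exact ⟨hw.symm, .inl (by simp)⟩

/-- For `n ≥ 4`, the identity is the only dominant vertex of the order super commuting
graph of the symmetric group `S_n`. -/
theorem isDominantVertex_orderSuper_commutingGraph_symmetricGroup_iff
    (n : ℕ) (hn : 4 ≤ n) (σ : Equiv.Perm (Fin n)) :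
    IsDominantVertex (orderSuper (Equiv.Perm (Fin n))
      (commutingGraph (Equiv.Perm (Fin n)))) σ ↔ σ = 1 := by
  refine ⟨fun hdom => ?_, fun h => h ▸ isDominantVertex_one_orderSuper_commutingGraph _⟩
  by_contra hσ
  have hσ2 : 2 ≤ orderOf σ := by
    have := orderOf_pos σ
    have := mt orderOf_eq_one_iff.1 hσ
    omega
  have hσn : ordProjSum (orderOf σ) ≤ n := by simpa using ordProjSum_orderOf_le σ
  obtain ⟨k, hkn, hkσ, hlcm⟩ := exists_ordProjSum_lt_ordProjSum_lcm (by omega) hσ2 hσn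
  have hk0 : k ≠ 0 := by rintro rfl; simp at hlcm
  obtain ⟨τ, hτ⟩ := exists_perm_orderOf_eq (α := Fin n) hk0 (by simpa using hkn)
  have hτσ : τ ≠ σ := fun h => hkσ (h ▸ hτ).symm
  rcases orderOf_eq_or_exists_orderOf_eq_lcm_of_adj (hdom τ hτσ) with h | ⟨ρ, hρ⟩
  · exact hkσ (hτ ▸ h.symm)
  · have := ordProjSum_orderOf_le ρ
    rw [hρ, hτ, Fintype.card_fin] at this
    omega
end

section
/- Let n ≥ 4 and let π̃_n = (π_n \ {2}) ∪ {4}, where π_n is the set of primes at most n. If T is a nonempty subset of π̃_n with Σ_{p∈T} p ≤ n, then there exists a nonempty subset T' of π̃_n \ T such that Σ_{p∈T'} p ≤ n and Σ_{p∈T} p + Σ_{p∈T'} p > n. -/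
def Ptil (x : ℕ) : Prop := (Nat.Prime x ∧ x ≠ 2) ∨ x = 4

instance : DecidablePred Ptil := fun x => by unfold Ptil; infer_instance

lemma sum_below : ∀ x : ℕ, Nat.Prime x → 5 ≤ x →
    x ≤ ∑ p ∈ (Finset.range x).filter Ptil, p := by
  intro x
  induction x using Nat.strong_induction_on with
  | _ x ih =>
    intro hx h5
    have hodd : x % 2 = 1 := Nat.Prime.eq_two_or_odd hx |>.resolve_left (by omega)
    set k := x / 2 with hk
    have hk2 : 2 ≤ k := by omega
    obtain ⟨y, hyp, hky, hy2k⟩ := Nat.exists_prime_lt_and_le_two_mul k (by omega)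
    have hyx : y < x := by omega
    have hy3 : 3 ≤ y := by have := hyp.two_le; omega
    by_cases hy5 : 5 ≤ y
    · have ihy := ih y hyx hyp hy5
      have hymem : y ∉ (Finset.range y).filter Ptil := by
        simp [Finset.mem_filter]
      have hsub : insert y ((Finset.range y).filter Ptil) ⊆ (Finset.range x).filter Ptil := by
        intro z hz
        rcases Finset.mem_insert.mp hz with h | h
        · subst h
          simp only [Finset.mem_filter, Finset.mem_range]
          exact ⟨hyx, Or.inl ⟨hyp, by omega⟩⟩
        · simp only [Finset.mem_filter, Finset.mem_range] at h ⊢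
          exact ⟨by omega, h.2⟩
      have hsum : ∑ p ∈ insert y ((Finset.range y).filter Ptil), p
          = y + ∑ p ∈ (Finset.range y).filter Ptil, p := Finset.sum_insert hymem
      have hle : ∑ p ∈ insert y ((Finset.range y).filter Ptil), p
          ≤ ∑ p ∈ (Finset.range x).filter Ptil, p := Finset.sum_le_sum_of_subset hsub
      omega
    · have hy4 : y ≠ 4 := by intro h; subst h; exact absurd hyp (by decide)
      have hy : y = 3 := by omega
      have hx5 : x = 5 := by omega
      subst hx5
      decide


lemma greedy (s : ℕ) : ∀ (k : ℕ) (B : Finset ℕ), B.card ≤ k → ∀ u : ℕ,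
    (∀ b ∈ B, b ≤ s + ∑ x ∈ B.filter (fun y => y < b), x) →
    u < s + ∑ x ∈ B, x →
    ∃ S, S ⊆ B ∧ (∑ x ∈ S, x) ≤ u ∧ u < s + ∑ x ∈ S, x := by
  intro k
  induction k with
  | zero =>
    intro B hB u hgap hu
    have hBe : B = ∅ := Finset.card_eq_zero.mp (Nat.le_antisymm hB (Nat.zero_le _))
    subst hBe
    exact ⟨∅, Finset.Subset.refl _, by simp, by simpa using hu⟩
  | succ k ih =>
    intro B hB u hgap hu
    by_cases hBu : ∑ x ∈ B, x ≤ u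
    · exact ⟨B, Finset.Subset.refl _, hBu, hu⟩
    · push_neg at hBu
      have hBne : B.Nonempty := by
        rcases B.eq_empty_or_nonempty with h | h
        · subst h; simp at hBu
        · exact h
      set b := B.max' hBne with hbdef
      have hbB : b ∈ B := B.max'_mem hBne
      have hcard : (B.erase b).card ≤ k := by
        have h1 := Finset.card_erase_of_mem hbB
        have h2 : 1 ≤ B.card := Finset.card_pos.mpr hBne
        omega
      have hsum : ∑ x ∈ B.erase b, x + b = ∑ x ∈ B, x :=
        Finset.sum_erase_add _ _ hbB
      have hfilt : ∀ b' ∈ B.erase b,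
          (B.erase b).filter (fun y => y < b') = B.filter (fun y => y < b') := by
        intro b' hb'
        have hb'B : b' ∈ B := Finset.mem_of_mem_erase hb'
        have hle : b' ≤ b := B.le_max' b' hb'B
        rw [Finset.filter_erase]
        apply Finset.erase_eq_of_notMem
        simp only [Finset.mem_filter]
        rintro ⟨-, hlt⟩
        omega
      have hgap' : ∀ b' ∈ B.erase b,
          b' ≤ s + ∑ x ∈ (B.erase b).filter (fun y => y < b'), x := by
        intro b' hb'
        rw [hfilt b' hb']
        exact hgap b' (Finset.mem_of_mem_erase hb')
      by_cases hbu : b ≤ u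
      · obtain ⟨S', hS'sub, hS'le, hS'gt⟩ := ih (B.erase b) hcard (u - b) hgap' (by omega)
        have hbS' : b ∉ S' := fun h => (Finset.ne_of_mem_erase (hS'sub h)) rfl
        refine ⟨insert b S', ?_, ?_, ?_⟩
        · exact Finset.insert_subset hbB (hS'sub.trans (Finset.erase_subset _ _))
        · rw [Finset.sum_insert hbS']; omega
        · rw [Finset.sum_insert hbS']; omega
      · push_neg at hbu
        have hble : b ≤ s + ∑ x ∈ B.erase b, x := by
          have h1 := hgap b hbB
          have h2 : B.filter (fun y => y < b) ⊆ B.erase b := by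
            intro x hx
            simp only [Finset.mem_filter] at hx
            exact Finset.mem_erase.mpr ⟨by omega, hx.1⟩
          have h3 : ∑ x ∈ B.filter (fun y => y < b), x ≤ ∑ x ∈ B.erase b, x :=
            Finset.sum_le_sum_of_subset h2
          omega
        obtain ⟨S, hSsub, hSle, hSgt⟩ := ih (B.erase b) hcard u hgap' (by omega)
        exact ⟨S, hSsub.trans (Finset.erase_subset _ _), hSle, hSgt⟩


lemma Kbang : ∀ n : ℕ, 9 ≤ n → ∃ S : Finset ℕ,
    (∀ x ∈ S, (Nat.Prime x ∧ 5 ≤ x) ∨ x = 4) ∧ (∀ x ∈ S, x + 4 ≤ n) ∧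
    n ≤ (∑ x ∈ S, x) + 2 ∧ (∑ x ∈ S, x) ≤ n := by
  intro n
  induction n using Nat.strong_induction_on with
  | _ n ih =>
    intro hn
    set F := (Finset.range (n - 3)).filter Nat.Prime with hF
    have h5F : 5 ∈ F := by
      simp only [hF, Finset.mem_filter, Finset.mem_range]
      exact ⟨by omega, by norm_num⟩
    have hFne : F.Nonempty := ⟨5, h5F⟩
    set p := F.max' hFne with hp
    have hpF : p ∈ F := F.max'_mem hFne
    have hpprime : Nat.Prime p := (Finset.mem_filter.mp hpF).2
    have hpn : p + 4 ≤ n := by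
      have := (Finset.mem_range.mp (Finset.mem_filter.mp hpF).1); omega
    have hp5 : 5 ≤ p := F.le_max' 5 h5F
    have hmaxF : ∀ q, Nat.Prime q → q + 4 ≤ n → q ≤ p := by
      intro q hq hqn
      exact F.le_max' q (by simp only [hF, Finset.mem_filter, Finset.mem_range]; exact ⟨by omega, hq⟩)
    -- Bertrand: 2p ≥ n - 3
    have hbert : n ≤ 2 * p + 3 := by
      set k := (n - 4) / 2 with hk
      have hk2 : 2 ≤ k := by omega
      obtain ⟨r, hrp, hkr, hr2k⟩ := Nat.exists_prime_lt_and_le_two_mul k (by omega)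
      have hrn : r + 4 ≤ n := by omega
      have := hmaxF r hrp hrn
      omega
    set m := n - p with hm
    have hm4 : 4 ≤ m := by omega
    have hmp3 : m ≤ p + 3 := by omega
    by_cases hm9 : 9 ≤ m
    · obtain ⟨U, hU1, hU2, hU3, hU4⟩ := ih m (by omega) hm9
      have hpU : p ∉ U := by
        intro h
        have := hU2 p h
        omega
      refine ⟨insert p U, ?_, ?_, ?_, ?_⟩
      · intro x hx
        rcases Finset.mem_insert.mp hx with h | h
        · exact Or.inl ⟨h ▸ hpprime, h ▸ hp5⟩
        · exact hU1 x h
      · intro x hx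
        rcases Finset.mem_insert.mp hx with h | h
        · omega
        · have := hU2 x h; omega
      · rw [Finset.sum_insert hpU]; omega
      · rw [Finset.sum_insert hpU]; omega
    · -- m ∈ {4,...,8}
      have hm8 : m ≤ 8 := by omega
      rcases Nat.lt_or_ge m 7 with hm7 | hm7
      · -- m ∈ {4,5,6}: S = {p, 4}
        refine ⟨{p, 4}, ?_, ?_, ?_, ?_⟩
        · intro x hx
          rcases Finset.mem_insert.mp hx with h | h
          · exact Or.inl ⟨h ▸ hpprime, h ▸ hp5⟩
          · exact Or.inr (Finset.mem_singleton.mp h)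
        · intro x hx
          rcases Finset.mem_insert.mp hx with h | h
          · omega
          · have : x = 4 := Finset.mem_singleton.mp h; omega
        · rw [Finset.sum_pair (by omega)]; omega
        · rw [Finset.sum_pair (by omega)]; omega
      · rcases Nat.eq_or_lt_of_le hm7 with hm7' | hm8'
        · -- m = 7 : S = {p, 5}, need p ≥ 7
          have hp7 : 7 ≤ p := hmaxF 7 (by norm_num) (by omega)
          refine ⟨{p, 5}, ?_, ?_, ?_, ?_⟩
          · intro x hx
            rcases Finset.mem_insert.mp hx with h | h
            · exact Or.inl ⟨h ▸ hpprime, h ▸ hp5⟩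
            · have : x = 5 := Finset.mem_singleton.mp h
              exact Or.inl ⟨this ▸ (by norm_num), by omega⟩
          · intro x hx
            rcases Finset.mem_insert.mp hx with h | h
            · omega
            · have : x = 5 := Finset.mem_singleton.mp h; omega
          · rw [Finset.sum_pair (by omega)]; omega
          · rw [Finset.sum_pair (by omega)]; omega
        · -- m = 8 : S = {p, 7}, need p ≥ 11
          have hm8'' : m = 8 := by omega
          have hp7 : 7 ≤ p := hmaxF 7 (by norm_num) (by omega)
          have hp11 : 11 ≤ p := by
            rcases Nat.eq_or_lt_of_le hp7 with h | h
            · -- p = 7, n = 15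
              have hn15 : n = 15 := by omega
              exact absurd (hmaxF 11 (by norm_num) (by omega)) (by omega)
            · -- 7 < p, p prime, p ≠ 8,9,10
              have h8 : p ≠ 8 := by intro e; rw [e] at hpprime; exact absurd hpprime (by decide)
              have h9 : p ≠ 9 := by intro e; rw [e] at hpprime; exact absurd hpprime (by decide)
              have h10 : p ≠ 10 := by intro e; rw [e] at hpprime; exact absurd hpprime (by decide)
              omega
          refine ⟨{p, 7}, ?_, ?_, ?_, ?_⟩
          · intro x hx
            rcases Finset.mem_insert.mp hx with h | h
            · exact Or.inl ⟨h ▸ hpprime, h ▸ hp5⟩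
            · have : x = 7 := Finset.mem_singleton.mp h
              exact Or.inl ⟨this ▸ (by norm_num), by omega⟩
          · intro x hx
            rcases Finset.mem_insert.mp hx with h | h
            · omega
            · have : x = 7 := Finset.mem_singleton.mp h; omega
          · rw [Finset.sum_pair (by omega)]; omega
          · rw [Finset.sum_pair (by omega)]; omega

lemma sum_pitil_gt (n : ℕ) (hn : 4 ≤ n) :
    n < ∑ p ∈ (Finset.range (n+1)).filter Ptil, p := by
  set k := n / 2 with hk
  have hk2 : 2 ≤ k := by omega
  obtain ⟨y, hyp, hky, hy2k⟩ := Nat.exists_prime_lt_and_le_two_mul k (by omega)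
  have hyn : y ≤ n := by omega
  have h2y : n + 1 ≤ 2 * y := by omega
  by_cases hy5 : 5 ≤ y
  · have hB := sum_below y hyp hy5
    have hymem : y ∉ (Finset.range y).filter Ptil := by simp
    have hsub : insert y ((Finset.range y).filter Ptil) ⊆ (Finset.range (n+1)).filter Ptil := by
      intro z hz
      rcases Finset.mem_insert.mp hz with h | h
      · subst h
        simp only [Finset.mem_filter, Finset.mem_range]
        exact ⟨by omega, Or.inl ⟨hyp, by omega⟩⟩
      · simp only [Finset.mem_filter, Finset.mem_range] at h ⊢
        exact ⟨by omega, h.2⟩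
    have hsum : ∑ p ∈ insert y ((Finset.range y).filter Ptil), p
        = y + ∑ p ∈ (Finset.range y).filter Ptil, p := Finset.sum_insert hymem
    have hle : ∑ p ∈ insert y ((Finset.range y).filter Ptil), p
        ≤ ∑ p ∈ (Finset.range (n+1)).filter Ptil, p := Finset.sum_le_sum_of_subset hsub
    omega
  · have hy4 : y ≠ 4 := by intro h; subst h; exact absurd hyp (by decide)
    have hy3 : 3 ≤ y := by have := hyp.two_le; omega
    have hy : y = 3 := by omega
    have hn5 : n ≤ 5 := by omega
    interval_cases n <;> decide

/-- For `n ≥ 4`, let `π̃_n = (π_n \ {2}) ∪ {4}` where `π_n` is the set of primes at most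
`n`. For a nonempty `T ⊆ π̃_n` with sum at most `n`, there is a nonempty `T' ⊆ π̃_n \ T`
with sum at most `n` such that the two sums together exceed `n`. -/
theorem exists_disjoint_subset_sum_alternating (n : ℕ) (hn : 4 ≤ n) (T : Finset ℕ)
    (hT : T.Nonempty) (hTmem : ∀ p ∈ T, (p.Prime ∧ p ≤ n ∧ p ≠ 2) ∨ p = 4)
    (hTsum : ∑ p ∈ T, p ≤ n) :
    ∃ T' : Finset ℕ, T'.Nonempty ∧ (∀ p ∈ T', (p.Prime ∧ p ≤ n ∧ p ≠ 2) ∨ p = 4) ∧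
      Disjoint T T' ∧ (∑ p ∈ T', p) ≤ n ∧ n < (∑ p ∈ T, p) + ∑ p ∈ T', p := by
  have hT3 : ∀ x ∈ T, 3 ≤ x := by
    intro x hx
    rcases hTmem x hx with ⟨hp, -, h2⟩ | h4
    · have := hp.two_le; omega
    · omega
  have hs3 : 3 ≤ ∑ p ∈ T, p := by
    obtain ⟨t, ht⟩ := hT
    calc 3 ≤ t := hT3 t ht
    _ ≤ ∑ p ∈ T, p := Finset.single_le_sum (f := fun x => x) (fun i _ => Nat.zero_le i) ht
  by_cases hA : T = {3}
  · -- special case T = {3}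
    subst hA
    have hsum3 : ∑ p ∈ ({3} : Finset ℕ), p = 3 := by simp
    by_cases hn9 : 9 ≤ n
    · obtain ⟨S, hS1, hS2, hS3, hS4⟩ := Kbang n hn9
      refine ⟨S, ?_, ?_, ?_, hS4, by omega⟩
      · rcases S.eq_empty_or_nonempty with h | h
        · subst h; simp at hS3; omega
        · exact h
      · intro x hx
        rcases hS1 x hx with ⟨hp, h5⟩ | h4
        · exact Or.inl ⟨hp, by have := hS2 x hx; omega, by omega⟩
        · exact Or.inr h4
      · rw [Finset.disjoint_singleton_left]
        intro h3
        rcases hS1 3 h3 with ⟨-, h5⟩ | h4 <;> omega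
    · -- 4 ≤ n ≤ 8
      interval_cases n
      · exact ⟨{4}, ⟨4, by simp⟩, by simp, by simp, by simp, by simp⟩
      · refine ⟨{5}, ⟨5, by simp⟩, ?_, by simp, by simp, by simp⟩
        intro p hp; simp at hp; subst hp; exact Or.inl ⟨by norm_num, by norm_num, by norm_num⟩
      · refine ⟨{5}, ⟨5, by simp⟩, ?_, by simp, by simp, by simp⟩
        intro p hp; simp at hp; subst hp; exact Or.inl ⟨by norm_num, by norm_num, by norm_num⟩
      · refine ⟨{5}, ⟨5, by simp⟩, ?_, by simp, by simp, by simp⟩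
        intro p hp; simp at hp; subst hp; exact Or.inl ⟨by norm_num, by norm_num, by norm_num⟩
      · refine ⟨{7}, ⟨7, by simp⟩, ?_, by simp, by simp, by simp⟩
        intro p hp; simp at hp; subst hp; exact Or.inl ⟨by norm_num, by norm_num, by norm_num⟩
  · -- main case: greedy
    set Pfin := (Finset.range (n+1)).filter Ptil with hPfin
    have hTsub : T ⊆ Pfin := by
      intro x hx
      simp only [hPfin, Finset.mem_filter, Finset.mem_range]
      rcases hTmem x hx with ⟨hp, hle, h2⟩ | h4
      · exact ⟨by omega, Or.inl ⟨hp, h2⟩⟩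
      · exact ⟨by omega, Or.inr h4⟩
    have h4s : 3 ∈ T → 4 ≤ ∑ p ∈ T, p := by
      intro h3T
      by_contra hlt
      have hseq : ∑ p ∈ T, p = 3 := by omega
      apply hA
      have herase : ∑ x ∈ T.erase 3, x + 3 = ∑ x ∈ T, x := Finset.sum_erase_add _ _ h3T
      have hzero : ∑ x ∈ T.erase 3, x = 0 := by omega
      apply Finset.eq_singleton_iff_unique_mem.mpr
      refine ⟨h3T, fun x hx => ?_⟩
      by_contra hne
      have hxe : x ∈ T.erase 3 := Finset.mem_erase.mpr ⟨hne, hx⟩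
      have : x ≤ ∑ y ∈ T.erase 3, y :=
        Finset.single_le_sum (f := fun y => y) (fun i _ => Nat.zero_le i) hxe
      have := hT3 x hx
      omega
    set B := Pfin \ T with hB
    have hgap : ∀ b ∈ B, b ≤ (∑ p ∈ T, p) + ∑ x ∈ B.filter (fun y => y < b), x := by
      intro b hb
      have hbP : b ∈ Pfin := (Finset.mem_sdiff.mp hb).1
      have hbT : b ∉ T := (Finset.mem_sdiff.mp hb).2
      have hbn : b ≤ n := by
        have := (Finset.mem_filter.mp hbP).1; simp only [Finset.mem_range] at this; omega
      have hbPt : Ptil b := (Finset.mem_filter.mp hbP).2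
      by_cases hb3 : b = 3
      · omega
      · by_cases hb4 : b = 4
        · subst hb4
          by_cases h3T : 3 ∈ T
          · have := h4s h3T; omega
          · have h3B : 3 ∈ B.filter (fun y => y < 4) := by
              simp only [hB, Finset.mem_filter, Finset.mem_sdiff, hPfin, Finset.mem_range]
              exact ⟨⟨⟨by omega, Or.inl ⟨by norm_num, by norm_num⟩⟩, h3T⟩, by norm_num⟩
            have : 3 ≤ ∑ x ∈ B.filter (fun y => y < 4), x :=
              Finset.single_le_sum (f := fun y => y) (fun i _ => Nat.zero_le i) h3B
            omega
        · -- b prime ≥ 5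
          have hbp : Nat.Prime b ∧ b ≠ 2 := by
            rcases hbPt with h | h
            · exact h
            · exact absurd h hb4
          have hb5 : 5 ≤ b := by
            have := hbp.1.two_le
            have h3' : b ≠ 3 := hb3
            rcases Nat.lt_or_ge b 5 with h | h
            · interval_cases b
              · exact absurd hbp.2 (by simp)
              · exact absurd rfl h3'
              · exact absurd rfl hb4
            · exact h
          have hBlow := sum_below b hbp.1 hb5
          set W := (Finset.range b).filter Ptil with hW
          have hsplit : ∑ x ∈ W ∩ T, x + ∑ x ∈ W \ T, x = ∑ x ∈ W, x :=
            Finset.sum_inter_add_sum_sdiff W T _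
          have h1 : ∑ x ∈ W ∩ T, x ≤ ∑ p ∈ T, p :=
            Finset.sum_le_sum_of_subset (Finset.inter_subset_right)
          have h2 : ∑ x ∈ W \ T, x ≤ ∑ x ∈ B.filter (fun y => y < b), x := by
            apply Finset.sum_le_sum_of_subset
            intro x hx
            have hxW : x ∈ W := (Finset.mem_sdiff.mp hx).1
            have hxT : x ∉ T := (Finset.mem_sdiff.mp hx).2
            have hxb : x < b := by
              have := (Finset.mem_filter.mp hxW).1; simpa using this
            have hxPt : Ptil x := (Finset.mem_filter.mp hxW).2
            simp only [hB, Finset.mem_filter, Finset.mem_sdiff, hPfin, Finset.mem_range]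
            exact ⟨⟨⟨by omega, hxPt⟩, hxT⟩, hxb⟩
          omega
    have hu : n < (∑ p ∈ T, p) + ∑ x ∈ B, x := by
      have hsd : ∑ x ∈ B, x + ∑ x ∈ T, x = ∑ x ∈ Pfin, x := Finset.sum_sdiff hTsub
      have hgt := sum_pitil_gt n hn
      rw [← hPfin] at hgt
      omega
    obtain ⟨S, hSsub, hSle, hSgt⟩ := greedy (∑ p ∈ T, p) B.card B le_rfl n hgap hu
    refine ⟨S, ?_, ?_, ?_, hSle, hSgt⟩
    · rcases S.eq_empty_or_nonempty with h | h
      · subst h; simp at hSgt; omega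
      · exact h
    · intro x hx
      have hxB := hSsub hx
      have hxP : x ∈ Pfin := (Finset.mem_sdiff.mp hxB).1
      have hxn : x ≤ n := by
        have := (Finset.mem_filter.mp hxP).1; simp only [Finset.mem_range] at this; omega
      rcases (Finset.mem_filter.mp hxP).2 with ⟨hp, h2⟩ | h4
      · exact Or.inl ⟨hp, hxn, h2⟩
      · exact Or.inr h4
    · rw [Finset.disjoint_right]
      intro x hxS
      exact (Finset.mem_sdiff.mp (hSsub hxS)).2
end

section
/- For n ≥ 4, the set of dominant vertices of the order super commuting graph Δ^o(A_n) of the alternating group A_n is exactly {e}; that is, an even permutation σ ∈ A_n is a dominant vertex of Δ^o(A_n) if and only if σ is the identity. -/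
/-!
Let `σ ≠ 1` and let `r` be a prime dividing `o(σ)`. If `w` has order `k` prime to `r` and `σ`
were adjacent to `w`, some `x` of order `o(σ)` would commute with some `y` of order `k`, and then
`x ^ (o(σ) / r) * y` would have order `r * k`. So it suffices to find an element order `k` of
`A_n` with `r ∤ k` such that `r * k` is not an element order of `A_n`.

Write `S N = sumOrdProj N` for the sum of the prime-power parts of `N`. A permutation of order
`N` moves at least `S N` points, and an even permutation of even order at least `S N + 2`, since
it has two cycles of even length and `S (lcm a b) + S (gcd a b) = S a + S b`. Take `k = ∏ Q` if
`r = 2` and `k = 2 ^ a * ∏ Q` if `r` is odd, with `Q` a set of odd primes other than `r`. Then `k`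
is the order of an even permutation with cycle type `Q`, resp. `Q + {2, 2 ^ a}`, and
`S (r * k) + 2 > n` as soon as `n - ∑ Q` (and then `a`) is chosen within a window of width about
`2 r`; greedily subtracting Bertrand primes puts `∑ Q` in that window.
-/

open Finset Equiv Perm

def HasOrderGap (G : Type*) [Group G] (r : ℕ) : Prop :=
  ∃ w : G, ¬ r ∣ orderOf w ∧ ∀ z : G, orderOf z ≠ r * orderOf w

section CommutingGraph

variable {G : Type*} [Group G]

lemma orderSuper_commutingGraph_adj {x y : G} :
    (orderSuper G (commutingGraph G)).Adj x y ↔ x ≠ y ∧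
      ∃ x' y' : G, orderOf x' = orderOf x ∧ orderOf y' = orderOf y ∧ Commute x' y' := by
  simp only [orderSuper, commutingGraph, SimpleGraph.fromRel_adj]
  refine and_congr_right fun _ => ⟨?_, fun ⟨a, b, ha, hb, hab⟩ => ?_⟩
  · rintro ((h | ⟨a, b, ha, hb, -, hab⟩) | (h | ⟨a, b, ha, hb, -, hab⟩))
    exacts [⟨x, x, rfl, h, Commute.refl x⟩, ⟨a, b, ha, hb, hab.elim id Eq.symm⟩,
      ⟨x, x, rfl, h.symm, Commute.refl x⟩, ⟨b, a, hb, ha, hab.elim Eq.symm id⟩]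
  · by_cases hab' : a = b
    · exact Or.inl (Or.inl (by rw [← ha, ← hb, hab']))
    · exact Or.inl (Or.inr ⟨a, b, ha, hb, hab', Or.inl hab⟩)

lemma isDominantVertex_of_mem_center {z : G} (hz : z ∈ Subgroup.center G) :
    IsDominantVertex (orderSuper G (commutingGraph G)) z := fun w hw =>
  orderSuper_commutingGraph_adj.mpr
    ⟨hw.symm, z, w, rfl, rfl, (Subgroup.mem_center_iff.mp hz w).symm⟩

lemma Commute.exists_orderOf_eq_mul {x y : G} (h : Commute x y) {d : ℕ} (hx : orderOf x ≠ 0)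
    (hd : d ∣ orderOf x) (hdy : d.Coprime (orderOf y)) : ∃ z : G, orderOf z = d * orderOf y := by
  have hxd := orderOf_pow_orderOf_div hx hd
  exact ⟨x ^ (orderOf x / d) * y, by
    rw [(h.pow_left _).orderOf_mul_eq_mul_orderOf_of_coprime (by rwa [hxd]), hxd]⟩

lemma not_isDominantVertex_of_hasOrderGap {σ : G} {r : ℕ} (hr : r.Prime) (hσ : IsOfFinOrder σ)
    (hrσ : r ∣ orderOf σ) (hG : HasOrderGap G r) :
    ¬ IsDominantVertex (orderSuper G (commutingGraph G)) σ := fun hdom => by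
  obtain ⟨w, hrw, hw⟩ := hG
  obtain ⟨x, y, hx, hy, hxy⟩ : ∃ x y : G,
      orderOf x = orderOf σ ∧ orderOf y = orderOf w ∧ Commute x y := by
    by_cases hwσ : w = σ
    · exact ⟨σ, σ, rfl, hwσ ▸ rfl, Commute.refl σ⟩
    · exact (orderSuper_commutingGraph_adj.mp (hdom w hwσ)).2
  obtain ⟨z, hz⟩ := hxy.exists_orderOf_eq_mul (hx ▸ hσ.orderOf_pos.ne') (hx ▸ hrσ)
    (hy ▸ hr.coprime_iff_not_dvd.mpr hrw)
  exact hw z (hy ▸ hz)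

end CommutingGraph

def sumOrdProj (n : ℕ) : ℕ := ∑ p ∈ n.primeFactors, ordProj[p] n

lemma sumOrdProj_eq_sum_of_subset {n : ℕ} {s : Finset ℕ} (hs : n.primeFactors ⊆ s) :
    sumOrdProj n = ∑ p ∈ s, if n.factorization p = 0 then 0 else ordProj[p] n := by
  rw [← Nat.support_factorization] at hs
  rw [sumOrdProj, ← Nat.support_factorization, ← sum_subset hs fun p _ hp =>
    if_pos (Finsupp.notMem_support_iff.mp hp)]
  exact sum_congr rfl fun p hp => (if_neg (Finsupp.mem_support_iff.mp hp)).symm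

-- Prime by prime, this is `max e f + min e f = e + f`.
lemma sumOrdProj_lcm_add_sumOrdProj_gcd {a b : ℕ} (ha : a ≠ 0) (hb : b ≠ 0) :
    sumOrdProj (a.lcm b) + sumOrdProj (a.gcd b) = sumOrdProj a + sumOrdProj b := by
  have hlcm : (a.lcm b).primeFactors ⊆ a.primeFactors ∪ b.primeFactors :=
    Nat.primeFactors_mul ha hb ▸ Nat.primeFactors_mono (Nat.lcm_dvd_mul a b) (mul_ne_zero ha hb)
  have hgcd : (a.gcd b).primeFactors ⊆ a.primeFactors ∪ b.primeFactors :=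
    (Nat.primeFactors_mono (Nat.gcd_dvd_left a b) ha).trans subset_union_left
  rw [sumOrdProj_eq_sum_of_subset hlcm, sumOrdProj_eq_sum_of_subset hgcd,
    sumOrdProj_eq_sum_of_subset subset_union_left, sumOrdProj_eq_sum_of_subset subset_union_right,
    ← sum_add_distrib, ← sum_add_distrib]
  refine sum_congr rfl fun p _ => ?_
  rw [Nat.factorization_lcm ha hb, Nat.factorization_gcd ha hb, Finsupp.sup_apply,
    Finsupp.inf_apply]
  rcases le_total (a.factorization p) (b.factorization p) with h | h
  · simp [h, add_comm]
  · simp [h]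

@[simp] lemma sumOrdProj_one : sumOrdProj 1 = 0 := by simp [sumOrdProj]

lemma sumOrdProj_prime_pow {p k : ℕ} (hp : p.Prime) (hk : k ≠ 0) :
    sumOrdProj (p ^ k) = p ^ k := by
  rw [sumOrdProj, Nat.primeFactors_prime_pow hk hp, sum_singleton, hp.factorization_pow,
    Finsupp.single_eq_same]

lemma sumOrdProj_prime {p : ℕ} (hp : p.Prime) : sumOrdProj p = p := by
  simpa using sumOrdProj_prime_pow hp one_ne_zero

lemma sumOrdProj_mul_of_coprime {a b : ℕ} (ha : a ≠ 0) (hb : b ≠ 0) (hab : a.Coprime b) :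
    sumOrdProj (a * b) = sumOrdProj a + sumOrdProj b := by
  simpa [hab.lcm_eq_mul, hab.gcd_eq_one] using sumOrdProj_lcm_add_sumOrdProj_gcd ha hb

lemma sumOrdProj_lcm_le {a b : ℕ} (ha : a ≠ 0) (hb : b ≠ 0) :
    sumOrdProj (a.lcm b) ≤ sumOrdProj a + sumOrdProj b :=
  (Nat.le_add_right _ _).trans (sumOrdProj_lcm_add_sumOrdProj_gcd ha hb).le

lemma sumOrdProj_le_self (n : ℕ) : sumOrdProj n ≤ n := by
  induction n using Nat.recOnPosPrimePosCoprime with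
  | prime_pow p k hp hk => exact (sumOrdProj_prime_pow hp hk.ne').le
  | zero => simp [sumOrdProj]
  | one => simp
  | coprime a b ha hb hab iha ihb =>
    rw [sumOrdProj_mul_of_coprime (by omega) (by omega) hab]
    nlinarith

lemma le_sumOrdProj_of_prime_dvd {p n : ℕ} (hp : p.Prime) (hpn : p ∣ n) (hn : n ≠ 0) :
    p ≤ sumOrdProj n := by
  have hmem : p ∈ n.primeFactors := Nat.mem_primeFactors.mpr ⟨hp, hpn, hn⟩
  calc p ≤ ordProj[p] n := Nat.le_self_pow (hp.factorization_pos_of_dvd hn hpn).ne' p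
    _ ≤ sumOrdProj n := single_le_sum (fun q _ => Nat.zero_le (ordProj[q] n)) hmem

lemma sumOrdProj_multiset_lcm_le_sum {T : Multiset ℕ} (hT : 0 ∉ T) :
    sumOrdProj T.lcm ≤ T.sum := by
  induction T using Multiset.induction_on with
  | empty => simp
  | cons a T ih =>
    rw [Multiset.mem_cons, not_or] at hT
    have hlcm : T.lcm ≠ 0 := by simpa [Multiset.lcm_eq_zero_iff] using hT.2
    rw [Multiset.lcm_cons, Multiset.sum_cons, lcm_eq_nat_lcm]
    calc sumOrdProj (a.lcm T.lcm) ≤ sumOrdProj a + sumOrdProj T.lcm :=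
          sumOrdProj_lcm_le (Ne.symm hT.1) hlcm
      _ ≤ a + T.sum := add_le_add (sumOrdProj_le_self a) (ih hT.2)

section PrimeSets

variable {Q : Finset ℕ}

lemma coprime_prod_of_prime_notMem {p : ℕ} (hp : p.Prime) (hQ : ∀ q ∈ Q, q.Prime)
    (hpQ : p ∉ Q) : p.Coprime (∏ q ∈ Q, q) :=
  Nat.Coprime.prod_right fun q hq => (Nat.coprime_primes hp (hQ q hq)).mpr fun h => hpQ (h ▸ hq)

lemma prod_primes_ne_zero (hQ : ∀ q ∈ Q, q.Prime) : ∏ q ∈ Q, q ≠ 0 :=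
  prod_ne_zero_iff.mpr fun q hq => (hQ q hq).ne_zero

lemma sumOrdProj_prod_primes (hQ : ∀ q ∈ Q, q.Prime) : sumOrdProj (∏ q ∈ Q, q) = ∑ q ∈ Q, q := by
  induction Q using Finset.induction_on with
  | empty => simp
  | insert q Q hq ih =>
    have hQ' : ∀ q' ∈ Q, q'.Prime := fun q' h => hQ q' (mem_insert_of_mem h)
    have hqp : q.Prime := hQ q (mem_insert_self q Q)
    rw [prod_insert hq, sum_insert hq, sumOrdProj_mul_of_coprime hqp.ne_zero
      (prod_primes_ne_zero hQ') (coprime_prod_of_prime_notMem hqp hQ' hq), sumOrdProj_prime hqp,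
      ih hQ']

lemma lcm_val_eq_prod_of_prime (hQ : ∀ q ∈ Q, q.Prime) : Q.val.lcm = ∏ q ∈ Q, q := by
  rw [← lcm_eq_prod fun p hp q hq hpq => (Nat.coprime_primes (hQ p hp) (hQ q hq)).mpr hpq,
    Finset.lcm_def, Multiset.map_id']

lemma even_sum_add_card_of_odd (hQ : ∀ q ∈ Q, Odd q) : Even (∑ q ∈ Q, q + #Q) := by
  rw [card_eq_sum_ones, ← sum_add_distrib]
  exact even_sum _ fun q hq => (hQ q hq).add_one

-- Greedy: take a prime `p > y / 2` and recurse on `y - p < p`, which keeps the primes distinct.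
lemma exists_finset_sum_le_lt_add {P : ℕ → Prop} {c : ℕ}
    (hP : ∀ y, c ≤ y → ∃ p, P p ∧ p ≤ y ∧ y < 2 * p) (y : ℕ) :
    ∃ Q : Finset ℕ, (∀ q ∈ Q, P q) ∧ ∑ q ∈ Q, q ≤ y ∧ y < ∑ q ∈ Q, q + c := by
  induction y using Nat.strong_induction_on with
  | _ y ih =>
  rcases lt_or_ge y c with hy | hy
  · exact ⟨∅, by simp, by simp, by simpa using hy⟩
  obtain ⟨p, hPp, hpy, hyp⟩ := hP y hy
  obtain ⟨Q, hQ, hQle, hQlt⟩ := ih (y - p) (by omega)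
  have hpQ : p ∉ Q := fun hp => by
    have := single_le_sum (fun q _ => Nat.zero_le q) hp
    omega
  refine ⟨insert p Q, ?_, ?_, ?_⟩
  · simpa [hPp] using hQ
  · rw [sum_insert hpQ]; omega
  · rw [sum_insert hpQ]; omega

lemma exists_prime_lt_le_lt_two_mul {r y : ℕ} (hr : 2 ≤ r) (hy : 2 * r ≤ y + 1) :
    ∃ p, p.Prime ∧ r < p ∧ p ≤ y ∧ y < 2 * p := by
  obtain ⟨p, hp, hlt, hle⟩ := Nat.exists_prime_lt_and_le_two_mul ((y + 1) / 2) (by omega)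
  have hpy : p ≠ y + 1 := by
    rintro rfl
    rcases hp.eq_one_or_self_of_dvd 2 (by omega) with h | h <;> omega
  exact ⟨p, hp, by omega, by omega, by omega⟩

lemma exists_finset_primes_sum_le_lt_add {r : ℕ} (hr : 2 ≤ r) (y : ℕ) :
    ∃ Q : Finset ℕ, (∀ q ∈ Q, q.Prime ∧ q ≠ 2 ∧ q ≠ r) ∧
      ∑ q ∈ Q, q ≤ y ∧ y < ∑ q ∈ Q, q + (2 * r - 1) := by
  refine exists_finset_sum_le_lt_add (fun y hy => ?_) y
  obtain ⟨p, hp, hrp, hpy, hyp⟩ := exists_prime_lt_le_lt_two_mul hr (by omega : 2 * r ≤ y + 1)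
  exact ⟨p, ⟨hp, by omega, by omega⟩, hpy, hyp⟩

lemma exists_pow_two_le_lt_add {m r : ℕ} (hm : 4 ≤ m) (hmr : m < 2 * r + 3) :
    ∃ a ≠ 0, 2 ^ a + 2 ≤ m ∧ m < 2 ^ a + 2 + r := by
  have hle : 2 ^ Nat.log 2 (m - 2) ≤ m - 2 := Nat.pow_log_le_self 2 (by omega)
  have hlt : m - 2 < 2 ^ (Nat.log 2 (m - 2) + 1) := Nat.lt_pow_succ_log_self (by norm_num) _
  rw [pow_succ] at hlt
  refine ⟨Nat.log 2 (m - 2), fun h => ?_, by omega, by omega⟩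
  rw [h] at hlt
  omega

end PrimeSets

lemma Nat.Prime.exists_mem_dvd_of_dvd_multiset_lcm {p : ℕ} (hp : p.Prime) {T : Multiset ℕ}
    (h : p ∣ T.lcm) : ∃ a ∈ T, p ∣ a := by
  induction T using Multiset.induction_on with
  | empty => exact absurd (Nat.dvd_one.mp (by simpa using h)) hp.ne_one
  | cons a T ih =>
    rw [Multiset.lcm_cons, lcm_eq_nat_lcm, hp.dvd_lcm] at h
    rcases h with h | h
    · exact ⟨a, Multiset.mem_cons_self a T, h⟩
    · obtain ⟨b, hb, hpb⟩ := ih h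
      exact ⟨b, Multiset.mem_cons_of_mem hb, hpb⟩

section Perm

variable {α : Type*} [Fintype α] [DecidableEq α]

-- The sign is `(-1) ^ #(even cycles)`, so an even permutation has no single even cycle.
lemma exists_cycleType_eq_cons_cons_of_two_dvd {z : Perm α} (hz : sign z = 1)
    (h2 : 2 ∣ orderOf z) :
    ∃ a b T, z.cycleType = a ::ₘ b ::ₘ T ∧ 2 ∣ a ∧ 2 ∣ b := by
  rw [← lcm_cycleType] at h2
  obtain ⟨a, ha, h2a⟩ := Nat.prime_two.exists_mem_dvd_of_dvd_multiset_lcm h2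
  obtain ⟨b, hb, h2b⟩ : ∃ b ∈ z.cycleType.erase a, 2 ∣ b := by
    by_contra! hodd
    have hprod : ((z.cycleType.erase a).map fun n => -(-1 : ℤˣ) ^ n).prod = 1 :=
      Multiset.prod_eq_one fun u hu => by
        obtain ⟨n, hn, rfl⟩ := Multiset.mem_map.mp hu
        simp [(Nat.odd_iff.mpr (Nat.two_dvd_ne_zero.mp (hodd n hn))).neg_one_pow]
    rw [sign_of_cycleType', ← Multiset.cons_erase ha, Multiset.map_cons, Multiset.prod_cons,
      hprod, (even_iff_two_dvd.mpr h2a).neg_one_pow] at hz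
    exact absurd hz (by decide)
  exact ⟨a, b, _, by rw [Multiset.cons_erase hb, Multiset.cons_erase ha], h2a, h2b⟩

lemma sumOrdProj_orderOf_add_two_le {z : Perm α} (hz : sign z = 1) (h2 : 2 ∣ orderOf z) :
    sumOrdProj (orderOf z) + 2 ≤ Fintype.card α := by
  obtain ⟨a, b, T, hT, h2a, h2b⟩ := exists_cycleType_eq_cons_cons_of_two_dvd hz h2
  have hpos : ∀ n ∈ z.cycleType, n ≠ 0 := fun n hn => by
    have := two_le_of_mem_cycleType hn; omega
  have ha : a ≠ 0 := hpos a (by simp [hT])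
  have hb : b ≠ 0 := hpos b (by simp [hT])
  have hT0 : 0 ∉ T := fun h => hpos 0 (by simp [hT, h]) rfl
  have hTlcm : T.lcm ≠ 0 := by simpa [Multiset.lcm_eq_zero_iff] using hT0
  have hgcd : 2 ≤ sumOrdProj (a.gcd b) :=
    le_sumOrdProj_of_prime_dvd Nat.prime_two (Nat.dvd_gcd h2a h2b) (Nat.gcd_ne_zero_left ha)
  have hlcm : orderOf z = (a.lcm b).lcm T.lcm := by
    rw [← lcm_cycleType, hT, Multiset.lcm_cons, Multiset.lcm_cons]
    simp only [lcm_eq_nat_lcm, Nat.lcm_assoc]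
  calc sumOrdProj (orderOf z) + 2
      ≤ sumOrdProj (a.lcm b) + sumOrdProj T.lcm + sumOrdProj (a.gcd b) := by
        rw [hlcm]
        have := sumOrdProj_lcm_le (Nat.lcm_ne_zero ha hb) hTlcm
        omega
    _ = sumOrdProj a + sumOrdProj b + sumOrdProj T.lcm := by
        rw [← sumOrdProj_lcm_add_sumOrdProj_gcd ha hb]; ring
    _ ≤ z.cycleType.sum := by
        rw [hT, Multiset.sum_cons, Multiset.sum_cons, ← add_assoc]
        gcongr
        exacts [sumOrdProj_le_self a, sumOrdProj_le_self b, sumOrdProj_multiset_lcm_le_sum hT0]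
    _ ≤ Fintype.card α := sum_cycleType_le z

lemma exists_sign_eq_one_orderOf_eq {T : Multiset ℕ} (hT : ∀ n ∈ T, 2 ≤ n)
    (hsum : T.sum ≤ Fintype.card α) (hsign : Even (T.sum + Multiset.card T)) :
    ∃ τ : Perm α, sign τ = 1 ∧ orderOf τ = T.lcm := by
  obtain ⟨τ, hτ⟩ := (exists_with_cycleType_iff α).mpr ⟨hsum, hT⟩
  exact ⟨τ, by rw [sign_of_cycleType, hτ, hsign.neg_one_pow], by rw [← lcm_cycleType, hτ]⟩

lemma alternatingGroup_hasOrderGap_of_cycleType {r : ℕ} {T : Multiset ℕ} (hT : ∀ n ∈ T, 2 ≤ n)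
    (hsum : T.sum ≤ Fintype.card α) (hsign : Even (T.sum + Multiset.card T))
    (hrT : ¬ r ∣ T.lcm) (h2 : 2 ∣ r * T.lcm)
    (hcard : Fintype.card α < sumOrdProj (r * T.lcm) + 2) :
    HasOrderGap (alternatingGroup α) r := by
  obtain ⟨τ, hτ, hord⟩ := exists_sign_eq_one_orderOf_eq hT hsum hsign
  refine ⟨⟨τ, mem_alternatingGroup.mpr hτ⟩, by rwa [Subgroup.orderOf_mk, hord], fun z hz => ?_⟩
  rw [← Subgroup.orderOf_coe, ← Subgroup.orderOf_coe, hord] at hz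
  have := sumOrdProj_orderOf_add_two_le (mem_alternatingGroup.mp z.2) (hz ▸ h2)
  rw [hz] at this
  omega

lemma alternatingGroup_hasOrderGap_two {Q : Finset ℕ} (hQ : ∀ q ∈ Q, q.Prime ∧ q ≠ 2)
    (hle : ∑ q ∈ Q, q ≤ Fintype.card α) (hlt : Fintype.card α < ∑ q ∈ Q, q + 4) :
    HasOrderGap (alternatingGroup α) 2 := by
  have hprime : ∀ q ∈ Q, q.Prime := fun q hq => (hQ q hq).1
  have hcop := coprime_prod_of_prime_notMem Nat.prime_two hprime fun h => (hQ 2 h).2 rfl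
  have hQeven := even_sum_add_card_of_odd fun q hq => (hQ q hq).1.odd_of_ne_two (hQ q hq).2
  refine alternatingGroup_hasOrderGap_of_cycleType (T := Q.val) (fun q hq => (hprime q hq).two_le)
    (by simpa [sum_val] using hle) (by simpa [sum_val] using hQeven)
    (by rwa [lcm_val_eq_prod_of_prime hprime, ← Nat.prime_two.coprime_iff_not_dvd])
    (dvd_mul_right 2 _) ?_
  rw [lcm_val_eq_prod_of_prime hprime, sumOrdProj_mul_of_coprime two_ne_zero
    (prod_primes_ne_zero hprime) hcop, sumOrdProj_prime Nat.prime_two,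
    sumOrdProj_prod_primes hprime]
  omega

lemma alternatingGroup_hasOrderGap_of_ne_two {r a : ℕ} {Q : Finset ℕ} (hr : r.Prime)
    (hr2 : r ≠ 2) (ha : a ≠ 0) (hQ : ∀ q ∈ Q, q.Prime ∧ q ≠ 2 ∧ q ≠ r)
    (hle : ∑ q ∈ Q, q + 2 ^ a + 2 ≤ Fintype.card α)
    (hlt : Fintype.card α < ∑ q ∈ Q, q + 2 ^ a + 2 + r) :
    HasOrderGap (alternatingGroup α) r := by
  have hprime : ∀ q ∈ Q, q.Prime := fun q hq => (hQ q hq).1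
  have hprod := prod_primes_ne_zero hprime
  have hcop : (2 ^ a).Coprime (∏ q ∈ Q, q) := Nat.Coprime.pow_left a <|
    coprime_prod_of_prime_notMem Nat.prime_two hprime fun h => (hQ 2 h).2.1 rfl
  have hrk : r.Coprime (2 ^ a * ∏ q ∈ Q, q) := Nat.Coprime.mul_right
    (Nat.Coprime.pow_right a ((Nat.coprime_primes hr Nat.prime_two).mpr hr2))
    (coprime_prod_of_prime_notMem hr hprime fun h => (hQ r h).2.2 rfl)
  have hlcm : (2 ::ₘ 2 ^ a ::ₘ Q.val).lcm = 2 ^ a * ∏ q ∈ Q, q := by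
    rw [Multiset.lcm_cons, Multiset.lcm_cons, lcm_val_eq_prod_of_prime hprime, lcm_eq_nat_lcm,
      lcm_eq_nat_lcm, hcop.lcm_eq_mul]
    exact Nat.lcm_eq_right (dvd_mul_of_dvd_left (dvd_pow_self 2 ha) _)
  have hsum : (2 ::ₘ 2 ^ a ::ₘ Q.val).sum = ∑ q ∈ Q, q + 2 ^ a + 2 := by
    simp [sum_val]
    omega
  have hQeven := even_sum_add_card_of_odd fun q hq => (hQ q hq).1.odd_of_ne_two (hQ q hq).2.1
  have h2a : Even (2 ^ a) := (Nat.even_pow' ha).mpr even_two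
  refine alternatingGroup_hasOrderGap_of_cycleType (T := 2 ::ₘ 2 ^ a ::ₘ Q.val) ?_ (hsum ▸ hle) ?_
    (hlcm ▸ (hr.coprime_iff_not_dvd.mp hrk))
    (hlcm ▸ dvd_mul_of_dvd_right (dvd_mul_of_dvd_left (dvd_pow_self 2 ha) _) r) ?_
  · simp only [Multiset.mem_cons, mem_val]
    rintro n (rfl | rfl | hn)
    exacts [le_rfl, Nat.le_self_pow ha 2, (hprime n hn).two_le]
  · rw [hsum, Multiset.card_cons, Multiset.card_cons, card_val]
    rw [Nat.even_iff] at hQeven h2a ⊢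
    omega
  · rw [hlcm, sumOrdProj_mul_of_coprime hr.ne_zero (mul_ne_zero (by positivity) hprod) hrk,
      sumOrdProj_mul_of_coprime (by positivity) hprod hcop, sumOrdProj_prime hr,
      sumOrdProj_prime_pow Nat.prime_two ha, sumOrdProj_prod_primes hprime]
    omega

theorem alternatingGroup_hasOrderGap (hα : 4 ≤ Fintype.card α) {r : ℕ} (hr : r.Prime) :
    HasOrderGap (alternatingGroup α) r := by
  rcases eq_or_ne r 2 with rfl | hr2
  · obtain ⟨Q, hQ, hle, hlt⟩ := exists_finset_primes_sum_le_lt_add le_rfl (Fintype.card α)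
    exact alternatingGroup_hasOrderGap_two (fun q hq => ⟨(hQ q hq).1, (hQ q hq).2.1⟩) hle
      (by omega)
  · obtain ⟨Q, hQ, hle, hlt⟩ := exists_finset_primes_sum_le_lt_add hr.two_le (Fintype.card α - 4)
    obtain ⟨a, ha, hale, halt⟩ :=
      exists_pow_two_le_lt_add (m := Fintype.card α - ∑ q ∈ Q, q) (r := r) (by omega) (by omega)
    exact alternatingGroup_hasOrderGap_of_ne_two hr hr2 ha hQ (by omega) (by omega)

end Perm

/-- For `n ≥ 4`, the identity is the only dominant vertex of the order super commuting
graph of the alternating group `A_n`. -/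
theorem isDominantVertex_orderSuper_commutingGraph_alternatingGroup_iff
    (n : ℕ) (hn : 4 ≤ n) (σ : alternatingGroup (Fin n)) :
    IsDominantVertex (orderSuper (alternatingGroup (Fin n))
      (commutingGraph (alternatingGroup (Fin n)))) σ ↔ σ = 1 := by
  refine ⟨fun hσ => ?_, fun h => h ▸ isDominantVertex_of_mem_center (Subgroup.one_mem _)⟩
  by_contra h1
  obtain ⟨r, hr, hrσ⟩ := Nat.exists_prime_and_dvd (orderOf_eq_one_iff.not.mpr h1)
  exact not_isDominantVertex_of_hasOrderGap hr (isOfFinOrder_of_finite σ) hrσ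
    (alternatingGroup_hasOrderGap (by simpa using hn) hr) hσ
end

section
/- Let n ≥ 4. The reduced order super commuting graph Δ^o(S_n)^*, i.e., the subgraph of Δ^o(S_n) induced on the non-identity permutations, is connected if and only if neither n nor n−1 is a prime number. -/
open Equiv Equiv.Perm

private lemma orderOf_swap_eq_two {α : Type*} [DecidableEq α] [Fintype α] {a b : α}
    (hab : a ≠ b) : orderOf (Equiv.swap a b) = 2 :=
  orderOf_eq_prime (by rw [pow_two, Equiv.swap_mul_self])
    (fun h => hab (Equiv.swap_eq_one_iff.mp h))

private def subEquiv (p n : ℕ) (h : p ≤ n) : Fin p ≃ {x : Fin n // (x : ℕ) < p} where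
  toFun i := ⟨⟨i.1, lt_of_lt_of_le i.2 h⟩, i.2⟩
  invFun x := ⟨x.1.1, x.2⟩
  left_inv i := rfl
  right_inv x := rfl

private def pCycle (p n : ℕ) (h : p ≤ n) : Equiv.Perm (Fin n) :=
  (finRotate p).extendDomain (subEquiv p n h)

private lemma orderOf_pCycle {p n : ℕ} (h2 : 2 ≤ p) (h : p ≤ n) :
    orderOf (pCycle p n h) = p := by
  have h1 := orderOf_injective (Equiv.Perm.extendDomainHom (subEquiv p n h))
    (Equiv.Perm.extendDomainHom_injective _) (finRotate p)
  have h3 : pCycle p n h = Equiv.Perm.extendDomainHom (subEquiv p n h) (finRotate p) := rfl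
  rw [h3, h1, (isCycle_finRotate_of_le h2).orderOf, support_finRotate_of_le h2]
  simp

private lemma pCycle_apply_not_lt {p n : ℕ} (h : p ≤ n) {x : Fin n} (hx : ¬ ((x : ℕ) < p)) :
    pCycle p n h x = x :=
  Equiv.Perm.extendDomain_apply_not_subtype _ _ hx

private lemma key_pow {n p : ℕ} (hp : p.Prime) (hn : n ≤ p + 1)
    {x y : Equiv.Perm (Fin n)} (hx : orderOf x = p) (hc : Commute x y) :
    ∃ k : ℕ, y = x ^ k := by
  have hcyc : x.IsCycle := by
    apply Equiv.Perm.isCycle_of_prime_order (hx ▸ hp)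
    have h1 : x.support.card ≤ n := by
      simpa using x.support.card_le_univ
    have h2 := hp.two_le
    rw [hx]; omega
  have hscard : x.support.card = p := (hcyc.orderOf).symm.trans hx
  have hmaps : ∀ a ∈ x.support, y a ∈ x.support := by
    intro a ha
    by_contra hb
    rw [Equiv.Perm.mem_support, not_not] at hb
    have hxy : x (y a) = y (x a) := by
      calc x (y a) = (x * y) a := rfl
        _ = (y * x) a := by rw [hc]
        _ = y (x a) := rfl
    have h4 : y (x a) = y a := by rw [← hxy, hb]
    exact (Equiv.Perm.mem_support.mp ha) (y.injective h4)
  have himg : x.support.image y = x.support :=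
    Finset.eq_of_subset_of_card_le
      (fun b hb => by
        obtain ⟨a, ha, rfl⟩ := Finset.mem_image.mp hb
        exact hmaps a ha)
      (le_of_eq (Finset.card_image_of_injective _ y.injective).symm)
  have hfix : ∀ b, b ∉ x.support → y b = b := by
    intro b hb
    have hyb : y b ∉ x.support := by
      intro hmem
      rw [← himg] at hmem
      obtain ⟨a, ha, hab⟩ := Finset.mem_image.mp hmem
      exact hb (y.injective hab ▸ ha)
    have hcompl : x.supportᶜ.card ≤ 1 := by
      rw [Finset.card_compl, hscard]
      simp only [Fintype.card_fin]
      omega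
    exact Finset.card_le_one.mp hcompl _ (Finset.mem_compl.mpr hyb) _ (Finset.mem_compl.mpr hb)
  have hne : x.support.Nonempty := Finset.card_pos.mp (by rw [hscard]; exact hp.pos)
  obtain ⟨a, ha⟩ := hne
  obtain ⟨k, hk⟩ := hcyc.exists_pow_eq (Equiv.Perm.mem_support.mp ha)
    (Equiv.Perm.mem_support.mp (hmaps a ha))
  refine ⟨k, Equiv.ext fun b => ?_⟩
  by_cases hb : b ∈ x.support
  · obtain ⟨j, hj⟩ := hcyc.exists_pow_eq (Equiv.Perm.mem_support.mp ha)
      (Equiv.Perm.mem_support.mp hb)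
    have hcj : Commute (x ^ j) y := hc.pow_left j
    calc y b = y ((x ^ j) a) := by rw [hj]
      _ = (y * x ^ j) a := rfl
      _ = (x ^ j * y) a := by rw [← hcj.eq]
      _ = (x ^ j) (y a) := rfl
      _ = (x ^ j) ((x ^ k) a) := by rw [hk]
      _ = (x ^ j * x ^ k) a := rfl
      _ = (x ^ k * x ^ j) a := by rw [pow_mul_comm]
      _ = (x ^ k) ((x ^ j) a) := rfl
      _ = (x ^ k) b := by rw [hj]
  · rw [hfix b hb]
    have h5 : b ∉ (x ^ k).support := fun hmem => hb (Equiv.Perm.support_pow_le x k hmem)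
    rw [Equiv.Perm.notMem_support] at h5
    rw [h5]

private abbrev Gam (n : ℕ) :=
  SimpleGraph.induce {σ : Equiv.Perm (Fin n) | σ ≠ 1}
    (orderSuper (Equiv.Perm (Fin n)) (commutingGraph (Equiv.Perm (Fin n))))

private lemma gam_adj_iff {n : ℕ} (u v : {σ : Equiv.Perm (Fin n) | σ ≠ 1}) :
    (Gam n).Adj u v ↔ (orderSuper (Equiv.Perm (Fin n))
      (commutingGraph (Equiv.Perm (Fin n)))).Adj u.1 v.1 := Iff.rfl

private lemma reach_of_witness {n : ℕ} (u v : {σ : Equiv.Perm (Fin n) | σ ≠ 1})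
    (h : orderOf u.1 = orderOf v.1 ∨ ∃ x y : Equiv.Perm (Fin n),
      x * y = y * x ∧ x ≠ y ∧ orderOf x = orderOf u.1 ∧ orderOf y = orderOf v.1) :
    (Gam n).Reachable u v := by
  by_cases huv : u = v
  · exact huv ▸ SimpleGraph.Reachable.refl u
  · apply SimpleGraph.Adj.reachable
    rw [gam_adj_iff, orderSuper, SimpleGraph.fromRel_adj]
    refine ⟨fun h' => huv (Subtype.ext h'), Or.inl ?_⟩
    rcases h with h | ⟨x, y, hcm, hxy, hx, hy⟩
    · exact Or.inl h
    · refine Or.inr ⟨x, y, hx, hy, ?_⟩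
      rw [commutingGraph, SimpleGraph.fromRel_adj]
      exact ⟨hxy, Or.inl hcm⟩

private lemma step_lemma {n p : ℕ} (hp : p.Prime) (hnp : n ≤ p + 1)
    {u v : {σ : Equiv.Perm (Fin n) | σ ≠ 1}}
    (h : (Gam n).Adj u v) (hu : orderOf u.1 = p) : orderOf v.1 = p := by
  rw [gam_adj_iff, orderSuper, SimpleGraph.fromRel_adj] at h
  obtain ⟨hne, hrel⟩ := h
  have hv1 : orderOf v.1 ≠ 1 := by
    have := v.2
    simp only [Set.mem_setOf_eq] at this
    rw [Ne, orderOf_eq_one_iff]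
    exact this
  have main : ∀ x y : Equiv.Perm (Fin n), orderOf x = p → Commute x y →
      orderOf y = orderOf v.1 → orderOf v.1 = p := by
    intro x y hx hc hy
    obtain ⟨k, rfl⟩ := key_pow hp hnp hx hc
    have : orderOf (x ^ k) ∣ p := hx ▸ orderOf_pow_dvd k
    rcases (Nat.Prime.eq_one_or_self_of_dvd hp _ this) with h1 | h1
    · exact absurd (hy ▸ h1 : orderOf v.1 = 1) hv1
    · rw [← hy, h1]
  have comm_of_adj : ∀ x y : Equiv.Perm (Fin n),
      (commutingGraph (Equiv.Perm (Fin n))).Adj x y → Commute x y := by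
    intro x y hxy
    rw [commutingGraph, SimpleGraph.fromRel_adj] at hxy
    rcases hxy.2 with h | h
    · exact h
    · exact h.symm
  rcases hrel with (h | ⟨x, y, hx, hy, hadj⟩) | (h | ⟨x, y, hx, hy, hadj⟩)
  · exact h ▸ hu
  · exact main x y (hx.trans hu) (comm_of_adj x y hadj) hy
  · exact hu ▸ h
  · exact main y x (hy.trans hu) (comm_of_adj x y hadj).symm hx

private lemma reach_lemma {n p : ℕ} (hp : p.Prime) (hnp : n ≤ p + 1)
    {u v : {σ : Equiv.Perm (Fin n) | σ ≠ 1}}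
    (h : (Gam n).Reachable u v) : orderOf u.1 = p → orderOf v.1 = p := by
  obtain ⟨w⟩ := h
  induction w with
  | nil => exact fun h => h
  | cons ha w ih => exact fun hu => ih (step_lemma hp hnp ha hu)

private lemma exists_cycle_trans {n p : ℕ} (hp2 : 2 ≤ p) (hple : p + 2 ≤ n) :
    ∃ c t : Equiv.Perm (Fin n), orderOf c = p ∧ orderOf t = 2 ∧ c * t = t * c ∧ c ≠ t := by
  have hpn : p ≤ n := by omega
  have ha12 : (⟨p, by omega⟩ : Fin n) ≠ ⟨p + 1, by omega⟩ :=
    Fin.ne_of_val_ne (show p ≠ p + 1 by omega)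
  refine ⟨pCycle p n hpn, Equiv.swap ⟨p, by omega⟩ ⟨p + 1, by omega⟩,
    orderOf_pCycle hp2 hpn, orderOf_swap_eq_two ha12, ?_, ?_⟩
  · have hdisj : Equiv.Perm.Disjoint (pCycle p n hpn)
        (Equiv.swap (⟨p, by omega⟩ : Fin n) ⟨p + 1, by omega⟩) := by
      intro x
      by_cases hx : (x : ℕ) < p
      · right
        apply Equiv.swap_apply_of_ne_of_ne
        · intro h; rw [h] at hx; exact lt_irrefl p hx
        · intro h; rw [h] at hx; exact lt_irrefl p (Nat.lt_of_succ_lt hx)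
      · left; exact pCycle_apply_not_lt hpn hx
    exact hdisj.commute.eq
  · intro h
    have hfix : pCycle p n hpn ⟨p, by omega⟩ = ⟨p, by omega⟩ :=
      pCycle_apply_not_lt hpn (lt_irrefl p)
    rw [h, Equiv.swap_apply_left] at hfix
    exact ha12 hfix.symm

-- ⇐ direction : connectivity
private lemma connected_of_not_prime {n : ℕ} (hn : 4 ≤ n)
    (h1 : ¬ n.Prime) (h2 : ¬ (n - 1).Prime) : (Gam n).Connected := by
  have h01 : (⟨0, by omega⟩ : Fin n) ≠ ⟨1, by omega⟩ :=
    Fin.ne_of_val_ne (show (0 : ℕ) ≠ 1 by omega)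
  have ht0o : orderOf (Equiv.swap (⟨0, by omega⟩ : Fin n) ⟨1, by omega⟩) = 2 :=
    orderOf_swap_eq_two h01
  have ht0ne : Equiv.swap (⟨0, by omega⟩ : Fin n) ⟨1, by omega⟩ ≠ 1 :=
    fun h => h01 (Equiv.swap_eq_one_iff.mp h)
  haveI : Nonempty {σ : Equiv.Perm (Fin n) | σ ≠ 1} := Nonempty.intro ⟨_, ht0ne⟩
  refine SimpleGraph.Connected.mk ?_
  have hub : ∀ u : {σ : Equiv.Perm (Fin n) | σ ≠ 1},
      (Gam n).Reachable u ⟨_, ht0ne⟩ := by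
    intro u
    have hσ1 : u.1 ≠ 1 := u.2
    have hm1 : orderOf u.1 ≠ 1 := fun h => hσ1 (orderOf_eq_one_iff.mp h)
    have hm0 : orderOf u.1 ≠ 0 := (orderOf_pos u.1).ne'
    have hp : (orderOf u.1).minFac.Prime := Nat.minFac_prime hm1
    set p := (orderOf u.1).minFac with hpdef
    have hpm : p ∣ orderOf u.1 := Nat.minFac_dvd _
    have hpn : p ≤ n := by
      have hd : orderOf u.1 ∣ Nat.factorial n := by
        have := orderOf_dvd_card (x := u.1)
        rwa [Fintype.card_perm, Fintype.card_fin] at this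
      exact (Nat.Prime.dvd_factorial hp).mp (hpm.trans hd)
    have hp2 : 2 ≤ p := hp.two_le
    have hple : p + 2 ≤ n := by
      rcases Nat.lt_or_ge p (n - 1) with h | h
      · omega
      · rcases Nat.eq_or_lt_of_le h with h' | h'
        · exact absurd (h' ▸ hp) h2
        · have hpn' : p = n := by omega
          exact absurd (hpn' ▸ hp) h1
    obtain ⟨c, t1, hco, ht1o, hcomm, hct1⟩ := exists_cycle_trans hp2 hple
    have hcne : c ≠ 1 := fun h => by
      rw [h, orderOf_one] at hco; omega
    have r1 : (Gam n).Reachable u ⟨c, hcne⟩ := by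
      apply reach_of_witness
      by_cases hmp : orderOf u.1 = p
      · exact Or.inl (hmp.trans hco.symm)
      · right
        refine ⟨u.1, u.1 ^ (orderOf u.1 / p), ?_, ?_, rfl, ?_⟩
        · exact (Commute.pow_right (Commute.refl u.1) _).eq
        · intro h
          have hthis : orderOf (u.1 ^ (orderOf u.1 / p)) = p := orderOf_pow_orderOf_div hm0 hpm
          rw [← h] at hthis
          exact hmp hthis
        · exact (orderOf_pow_orderOf_div hm0 hpm).trans hco.symm
    have r2 : (Gam n).Reachable (⟨c, hcne⟩ : {σ : Equiv.Perm (Fin n) | σ ≠ 1}) ⟨_, ht0ne⟩ := by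
      apply reach_of_witness
      exact Or.inr ⟨c, t1, hcomm, hct1, rfl, ht1o.trans ht0o.symm⟩
    exact r1.trans r2
  exact fun u v => (hub u).trans (hub v).symm

-- ⇒ direction : disconnectedness when n or n-1 is prime
private lemma not_connected_of_prime {n p : ℕ} (hn : 4 ≤ n) (hp : p.Prime)
    (hpn : p ≤ n) (hnp : n ≤ p + 1) (h3 : 3 ≤ p) : ¬ (Gam n).Connected := by
  intro hcon
  have hp2 : 2 ≤ p := hp.two_le
  have hco := orderOf_pCycle (n := n) hp2 hpn
  have hcne : pCycle p n hpn ≠ 1 := fun h => by rw [h, orderOf_one] at hco; omega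
  have h01 : (⟨0, by omega⟩ : Fin n) ≠ ⟨1, by omega⟩ :=
    Fin.ne_of_val_ne (show (0 : ℕ) ≠ 1 by omega)
  have ht0o : orderOf (Equiv.swap (⟨0, by omega⟩ : Fin n) ⟨1, by omega⟩) = 2 :=
    orderOf_swap_eq_two h01
  have ht0ne : Equiv.swap (⟨0, by omega⟩ : Fin n) ⟨1, by omega⟩ ≠ 1 :=
    fun h => h01 (Equiv.swap_eq_one_iff.mp h)
  have hreach := hcon.preconnected ⟨_, hcne⟩ ⟨_, ht0ne⟩
  have h2p := reach_lemma hp hnp hreach hco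
  rw [ht0o] at h2p
  omega

/-- For `n ≥ 4`, the reduced order super commuting graph of `S_n` (the induced subgraph
on the non-identity permutations) is connected iff neither `n` nor `n - 1` is prime. -/
theorem reduced_orderSuper_commutingGraph_symmetricGroup_connected_iff
    (n : ℕ) (hn : 4 ≤ n) :
    (SimpleGraph.induce {σ : Equiv.Perm (Fin n) | σ ≠ 1}
        (orderSuper (Equiv.Perm (Fin n)) (commutingGraph (Equiv.Perm (Fin n))))).Connected
      ↔ ¬ n.Prime ∧ ¬ (n - 1).Prime := by
  constructor
  · intro hcon
    constructor
    · intro hprime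
      exact absurd hcon (not_connected_of_prime hn hprime le_rfl (by omega) (by omega))
    · intro hprime
      exact absurd hcon (not_connected_of_prime hn hprime (by omega) (by omega) (by omega))
  · rintro ⟨h1, h2⟩
    exact connected_of_not_prime hn h1 h2
end

section
/- Let n ≥ 4 and suppose q is a prime with q = n or q = n−1. Then Δ^o(S_n)^*, the subgraph of Δ^o(S_n) induced on S_n \ {e}, has exactly two connected components, namely the set of elements of order q and the set of non-identity elements of order different from q. -/
private lemma aux_pow_div {G : Type*} [Group G] (x : G) {d : ℕ}
    (hm : orderOf x ≠ 0) (hd : d ∣ orderOf x) :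
    orderOf (x ^ (orderOf x / d)) = d := by
  have hdvd : orderOf x / d ∣ orderOf x := Nat.div_dvd_of_dvd hd
  have hmd := Nat.div_mul_cancel hd
  have hpos : orderOf x / d ≠ 0 := fun h => hm (by rw [← hmd, h, zero_mul])
  rw [orderOf_pow' x hpos, Nat.gcd_eq_right hdvd, Nat.div_div_self hd hm]

open Equiv Equiv.Perm in
private lemma aux_mem_zpowers {n q : ℕ} (hq : q.Prime) (hn1 : n ≤ q + 1)
    {c g : Equiv.Perm (Fin n)} (hc : orderOf c = q) (hcom : Commute g c) :
    g ∈ Subgroup.zpowers c := by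
  classical
  have hq2 : 2 ≤ q := hq.two_le
  have hcyc : c.IsCycle := by
    apply isCycle_of_prime_order (hc ▸ hq)
    calc c.support.card ≤ Fintype.card (Fin n) := c.support.card_le_univ
    _ = n := Fintype.card_fin n
    _ < 2 * orderOf c := by rw [hc]; omega
  have hsupp : c.support.card = q := by rw [← hcyc.orderOf, hc]
  obtain ⟨hc', hmem⟩ := hcyc.commute_iff.mp hcom
  have hcompl : (c.supportᶜ : Finset (Fin n)).card ≤ 1 := by
    rw [Finset.card_compl, hsupp, Fintype.card_fin]; omega
  have hg : ofSubtype (g.subtypePerm hc') = g := by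
    apply Equiv.ext
    intro x
    by_cases hx : x ∈ c.support
    · rw [ofSubtype_subtypePerm_of_mem hc' hx]
    · rw [ofSubtype_subtypePerm_of_not_mem hc' hx]
      have hgx : g x ∉ c.support := fun h => hx ((hc' x).mp h)
      exact_mod_cast Finset.card_le_one.mp hcompl x (Finset.mem_compl.mpr hx)
        (g x) (Finset.mem_compl.mpr hgx)
  rwa [hg] at hmem

private lemma aux_order_eq_q {n q : ℕ} (hq : q.Prime) (hn1 : n ≤ q + 1)
    {x : Equiv.Perm (Fin n)} (hdvd : q ∣ orderOf x) : orderOf x = q := by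
  have hm : orderOf x ≠ 0 := (orderOf_pos x).ne'
  have hz : orderOf (x ^ (orderOf x / q)) = q := aux_pow_div x hm hdvd
  have hcom : Commute x (x ^ (orderOf x / q)) := (Commute.refl x).pow_right _
  have hmem := aux_mem_zpowers hq hn1 hz hcom
  have h2 := orderOf_dvd_of_mem_zpowers hmem
  rw [hz] at h2
  exact Nat.dvd_antisymm h2 hdvd

open Equiv in
private lemma aux_exists_cycle {n k : ℕ} (hk1 : 1 ≤ k) (hkn : k ≤ n) :
    ∃ σ : Equiv.Perm (Fin n), orderOf σ = k ∧ ∀ j : Fin n, k ≤ (j : ℕ) → σ j = j := by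
  obtain ⟨m, rfl⟩ : ∃ m, n = m + 1 := ⟨n - 1, by omega⟩
  rcases eq_or_lt_of_le hk1 with rfl | hk2
  · exact ⟨1, orderOf_one, fun j _ => rfl⟩
  · have hi : k - 1 < m + 1 := by omega
    set i : Fin (m + 1) := ⟨k - 1, hi⟩ with hidef
    have h0 : i ≠ 0 := by
      simp only [hidef, Ne, Fin.ext_iff, Fin.val_zero]
      omega
    refine ⟨Fin.cycleRange i, ?_, ?_⟩
    · rw [← Equiv.Perm.lcm_cycleType, Fin.cycleType_cycleRange h0,
        Multiset.lcm_singleton, normalize_eq]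
      simp only [hidef]
      omega
    · intro j hj
      apply Fin.cycleRange_of_gt
      rw [Fin.lt_def]
      simp only [hidef]
      omega

/-- For `n ≥ 4`, if `q` is a prime with `q = n` or `q = n - 1`, then the reduced order
super commuting graph of `S_n` has exactly two connected components: the elements of
order `q`, and the non-identity elements of order different from `q`. -/
theorem reduced_orderSuper_commutingGraph_symmetricGroup_two_components
    (n : ℕ) (hn : 4 ≤ n) (q : ℕ) (hq : q.Prime) (hqn : q = n ∨ q = n - 1) :
    (∃ x : {σ : Equiv.Perm (Fin n) | σ ≠ 1}, orderOf (x : Equiv.Perm (Fin n)) = q) ∧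
    (∃ x : {σ : Equiv.Perm (Fin n) | σ ≠ 1}, orderOf (x : Equiv.Perm (Fin n)) ≠ q) ∧
    ∀ x y : {σ : Equiv.Perm (Fin n) | σ ≠ 1},
      (SimpleGraph.induce {σ : Equiv.Perm (Fin n) | σ ≠ 1}
        (orderSuper (Equiv.Perm (Fin n))
          (commutingGraph (Equiv.Perm (Fin n))))).Reachable x y ↔
        (orderOf (x : Equiv.Perm (Fin n)) = q ↔ orderOf (y : Equiv.Perm (Fin n)) = q) := by
  classical
  have hq2 : 2 ≤ q := hq.two_le
  have hqpar : q % 2 = 1 := by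
    rcases hq.eq_two_or_odd with h | h
    · rcases hqn with rfl | rfl <;> omega
    · exact h
  have hqle : q ≤ n := by rcases hqn with rfl | rfl <;> omega
  have hn1 : n ≤ q + 1 := by rcases hqn with rfl | rfl <;> omega
  have hq3 : 3 ≤ q := by omega
  set S : Set (Equiv.Perm (Fin n)) := {σ : Equiv.Perm (Fin n) | σ ≠ 1} with hSdef
  set Γ : SimpleGraph S := SimpleGraph.induce S
    (orderSuper (Equiv.Perm (Fin n)) (commutingGraph (Equiv.Perm (Fin n)))) with hΓdef
  -- adjacency from commuting witnesses
  have hadj : ∀ (x y : S) (a b : Equiv.Perm (Fin n)),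
      (x : Equiv.Perm (Fin n)) ≠ y → a ≠ b → Commute a b →
      orderOf a = orderOf (x : Equiv.Perm (Fin n)) →
      orderOf b = orderOf (y : Equiv.Perm (Fin n)) → Γ.Adj x y := by
    intro x y a b hxy hab hC ha hb
    show (orderSuper _ _).Adj (x : Equiv.Perm (Fin n)) y
    rw [orderSuper, SimpleGraph.fromRel_adj]
    refine ⟨hxy, Or.inl (Or.inr ⟨a, b, ha, hb, ?_⟩)⟩
    rw [commutingGraph, SimpleGraph.fromRel_adj]
    exact ⟨hab, Or.inl hC⟩
  have hadj_eq : ∀ (x y : S), (x : Equiv.Perm (Fin n)) ≠ y →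
      orderOf (x : Equiv.Perm (Fin n)) = orderOf (y : Equiv.Perm (Fin n)) → Γ.Adj x y := by
    intro x y hxy h
    show (orderSuper _ _).Adj (x : Equiv.Perm (Fin n)) y
    rw [orderSuper, SimpleGraph.fromRel_adj]
    exact ⟨hxy, Or.inl (Or.inl h)⟩
  -- commuting with an order-q element forces order 1 or q
  have hcb : ∀ a b : Equiv.Perm (Fin n), Commute a b → orderOf a = q →
      orderOf b = 1 ∨ orderOf b = q := by
    intro a b hC ha
    have hmem := aux_mem_zpowers hq hn1 ha hC.symm
    have := orderOf_dvd_of_mem_zpowers hmem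
    rw [ha] at this
    exact hq.eq_one_or_self_of_dvd _ this
  -- blocking lemma
  have hblock : ∀ x y : S, Γ.Adj x y →
      orderOf (x : Equiv.Perm (Fin n)) = q → orderOf (y : Equiv.Perm (Fin n)) = q := by
    intro x y hxy hx
    have hy1 : orderOf (y : Equiv.Perm (Fin n)) ≠ 1 := by
      rw [Ne, orderOf_eq_one_iff]; exact y.2
    have h : (orderSuper _ (commutingGraph _)).Adj (x : Equiv.Perm (Fin n)) y := hxy
    rw [orderSuper, SimpleGraph.fromRel_adj] at h
    obtain ⟨-, h⟩ := h
    have key : ∀ a b : Equiv.Perm (Fin n), orderOf a = q →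
        orderOf b = orderOf (y : Equiv.Perm (Fin n)) →
        (commutingGraph (Equiv.Perm (Fin n))).Adj a b →
        orderOf (y : Equiv.Perm (Fin n)) = q := by
      intro a b ha hb hab
      rw [commutingGraph, SimpleGraph.fromRel_adj] at hab
      obtain ⟨-, hab⟩ := hab
      have hC : Commute a b := by
        rcases hab with h' | h'
        · exact h'
        · exact h'.symm
      rcases hcb a b hC ha with h' | h'
      · rw [hb] at h'; exact absurd h' hy1
      · rw [← hb, h']
    rcases h with (h | ⟨a, b, ha, hb, hab⟩) | (h | ⟨a, b, ha, hb, hab⟩)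
    · rw [← h, hx]
    · exact key a b (ha.trans hx) hb hab
    · rw [h, hx]
    · exact key b a (hb.trans hx) ha hab.symm
  -- base order-2 element
  obtain ⟨τ₀, hτord, -⟩ := aux_exists_cycle (n := n) (k := 2) one_le_two (by omega)
  have hτne : τ₀ ∈ S := by
    intro h
    rw [h, orderOf_one] at hτord
    omega
  set τ : S := ⟨τ₀, hτne⟩ with hτdef
  have hτcoe : orderOf (τ : Equiv.Perm (Fin n)) = 2 := hτord
  -- every non-identity vertex of order ≠ q reaches τ
  have hreach2 : ∀ m : ℕ, ∀ x : S, orderOf (x : Equiv.Perm (Fin n)) = m → m ≠ q →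
      Γ.Reachable x τ := by
    intro m
    induction m using Nat.strong_induction_on with
    | _ m ih =>
      intro x hx hmq
      have hm1 : m ≠ 1 := by
        rw [← hx, Ne, orderOf_eq_one_iff]
        exact x.2
      have hm0 : m ≠ 0 := by
        rw [← hx]
        exact (orderOf_pos _).ne'
      by_cases hme : 2 ∣ m
      · by_cases hm2 : m = 2
        · by_cases hxt : (x : Equiv.Perm (Fin n)) = τ₀
          · have hxτ : x = τ := Subtype.ext hxt
            rw [hxτ]
          · exact (hadj_eq x τ hxt (by rw [hx, hτcoe, hm2])).reachable
        · -- m even, m ≥ 4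
          have hord : orderOf ((x : Equiv.Perm (Fin n)) ^ (m / 2)) = 2 := by
            have h := aux_pow_div (x : Equiv.Perm (Fin n)) (d := 2)
              (by rw [hx]; exact hm0) (by rw [hx]; exact hme)
            rwa [hx] at h
          have hyne : ((x : Equiv.Perm (Fin n)) ^ (m / 2)) ∈ S := by
            intro h
            rw [h, orderOf_one] at hord
            omega
          set y : S := ⟨(x : Equiv.Perm (Fin n)) ^ (m / 2), hyne⟩ with hydef
          have hxy : (x : Equiv.Perm (Fin n)) ≠ y := by
            intro h
            have h2 : orderOf (x : Equiv.Perm (Fin n)) = 2 := by rw [h]; exact hord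
            rw [hx] at h2
            omega
          have hC : Commute (x : Equiv.Perm (Fin n)) ((x : Equiv.Perm (Fin n)) ^ (m / 2)) :=
            (Commute.refl _).pow_right _
          have hadjxy : Γ.Adj x y := hadj x y x ((x : Equiv.Perm (Fin n)) ^ (m / 2))
            hxy (fun h => hxy (h ▸ rfl)) hC rfl rfl
          exact hadjxy.reachable.trans (ih 2 (by omega) y hord (by omega))
      · -- m odd
        set p : ℕ := m.minFac with hpdef
        have hp : p.Prime := Nat.minFac_prime hm1
        have hpd : p ∣ m := Nat.minFac_dvd m
        have hp2 : p ≠ 2 := by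
          intro h
          exact hme (h ▸ hpd)
        have hppar : p % 2 = 1 := by
          rcases hp.eq_two_or_odd with h | h
          · exact absurd h hp2
          · exact h
        have hpn : p ≤ n := by
          have h1 : orderOf (x : Equiv.Perm (Fin n)) ∣ Fintype.card (Equiv.Perm (Fin n)) :=
            orderOf_dvd_card
          rw [hx, Fintype.card_perm, Fintype.card_fin] at h1
          exact (Nat.Prime.dvd_factorial hp).mp (hpd.trans h1)
        have hpq : p ≠ q := by
          intro h
          apply hmq
          rw [← hx]
          exact aux_order_eq_q hq hn1 (hx ▸ h ▸ hpd)
        have hpn2 : p ≤ n - 2 := by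
          rcases hqn with h | h <;> omega
        by_cases hmp : m = p
        · -- m is an odd prime ≤ n - 2 : disjoint p-cycle and transposition
          obtain ⟨c, hcord, hcfix⟩ := aux_exists_cycle (n := n) (k := p) hp.one_lt.le (by omega)
          have hw1 : n - 2 < n := by omega
          have hw2 : n - 1 < n := by omega
          set w₁ : Fin n := ⟨n - 2, hw1⟩ with hw1def
          set w₂ : Fin n := ⟨n - 1, hw2⟩ with hw2def
          have hwne : w₁ ≠ w₂ := by
            simp only [hw1def, hw2def, Ne, Fin.ext_iff]
            omega
          set τ' : Equiv.Perm (Fin n) := Equiv.swap w₁ w₂ with hτ'def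
          have hτ'ord : orderOf τ' = 2 := by
            haveI : Fact (Nat.Prime 2) := ⟨Nat.prime_two⟩
            apply orderOf_eq_prime
            · rw [pow_two, hτ'def, Equiv.swap_mul_self]
            · rw [hτ'def, Ne, Equiv.swap_eq_one_iff]
              exact hwne
          have hdisj : c.Disjoint τ' := by
            intro z
            by_cases hz : p ≤ (z : ℕ)
            · exact Or.inl (hcfix z hz)
            · right
              rw [hτ'def]
              apply Equiv.swap_apply_of_ne_of_ne
              · simp only [hw1def, Ne, Fin.ext_iff]; omega
              · simp only [hw2def, Ne, Fin.ext_iff]; omega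
          have hC : Commute c τ' := hdisj.commute
          have hcτ' : c ≠ τ' := by
            intro h
            rw [h, hτ'ord] at hcord
            omega
          have hxt : (x : Equiv.Perm (Fin n)) ≠ τ₀ := by
            intro h
            have h2 : orderOf (x : Equiv.Perm (Fin n)) = 2 := by rw [h]; exact hτord
            rw [hx] at h2
            omega
          exact (hadj x τ c τ' hxt hcτ' hC (by rw [hcord, hx, hmp])
            (by rw [hτ'ord, hτcoe])).reachable
        · -- m composite odd : step down to m / p
          set k : ℕ := m / p with hkdef
          have hkm : m = p * k := (Nat.mul_div_cancel' hpd).symm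
          have hk1 : k ≠ 1 := by
            intro h
            rw [h, mul_one] at hkm
            exact hmp hkm
          have hk0 : k ≠ 0 := by
            intro h
            rw [h, mul_zero] at hkm
            exact hm0 hkm
          have hklt : k < m := by
            have := hp.two_le
            calc k = m / p := rfl
            _ < m := Nat.div_lt_self (by omega) (by omega)
          have hord : orderOf ((x : Equiv.Perm (Fin n)) ^ p) = k := by
            rw [orderOf_pow' _ hp.pos.ne', hx, Nat.gcd_eq_right hpd]
          have hkq : k ≠ q := by
            intro h
            have hqd : q ∣ m := h ▸ ⟨p, by rw [hkm, mul_comm]⟩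
            have := aux_order_eq_q hq hn1 (x := (x : Equiv.Perm (Fin n))) (hx ▸ hqd)
            rw [hx] at this
            omega
          have hyne : ((x : Equiv.Perm (Fin n)) ^ p) ∈ S := by
            intro h
            rw [h, orderOf_one] at hord
            exact hk1 hord.symm
          set y : S := ⟨(x : Equiv.Perm (Fin n)) ^ p, hyne⟩ with hydef
          have hxy : (x : Equiv.Perm (Fin n)) ≠ y := by
            intro h
            have h2 : orderOf (x : Equiv.Perm (Fin n)) = k := by rw [h]; exact hord
            rw [hx] at h2
            omega
          have hC : Commute (x : Equiv.Perm (Fin n)) ((x : Equiv.Perm (Fin n)) ^ p) :=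
            (Commute.refl _).pow_right _
          have hadjxy : Γ.Adj x y := hadj x y x ((x : Equiv.Perm (Fin n)) ^ p)
            hxy (fun h => hxy (h ▸ rfl)) hC rfl rfl
          exact hadjxy.reachable.trans (ih k hklt y hord hkq)
  -- existence of an order-q element
  obtain ⟨cq, hcqord, -⟩ := aux_exists_cycle (n := n) (k := q) (by omega) hqle
  have hcqne : cq ∈ S := by
    intro h
    rw [h, orderOf_one] at hcqord
    omega
  refine ⟨⟨⟨cq, hcqne⟩, hcqord⟩, ⟨τ, by rw [hτcoe]; omega⟩, ?_⟩
  intro x y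
  constructor
  · rintro ⟨w⟩
    induction w with
    | nil => exact Iff.rfl
    | cons h w ih =>
      exact (Iff.intro (hblock _ _ h) (hblock _ _ h.symm)).trans ih
  · intro h
    by_cases hx : orderOf (x : Equiv.Perm (Fin n)) = q
    · have hy : orderOf (y : Equiv.Perm (Fin n)) = q := h.mp hx
      by_cases hxy : x = y
      · rw [hxy]
      · exact (hadj_eq x y (fun h' => hxy (Subtype.ext h')) (by rw [hx, hy])).reachable
    · have hy : orderOf (y : Equiv.Perm (Fin n)) ≠ q := fun h' => hx (h.mpr h')
      exact (hreach2 _ x rfl hx).trans (hreach2 _ y rfl hy).symm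
end

section
/- Let n ≥ 4 with neither n nor n−1 prime, and let x be a non-identity element of S_n. Then there exists a non-identity y ∈ S_n with o(y) = 2 such that the distance between x and y in the reduced order super commuting graph Δ^o(S_n)^* is at most 2. -/
set_option maxHeartbeats 1000000


open Equiv Equiv.Perm in
private lemma aux_adj_pair {n : ℕ} {a b a' b' : Equiv.Perm (Fin n)} (hab : a ≠ b)
    (ha' : orderOf a' = orderOf a) (hb' : orderOf b' = orderOf b) (hab' : a' ≠ b')
    (hcomm : a' * b' = b' * a') :
    (orderSuper (Equiv.Perm (Fin n)) (commutingGraph (Equiv.Perm (Fin n)))).Adj a b := by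
  rw [orderSuper, SimpleGraph.fromRel_adj]
  refine ⟨hab, Or.inl (Or.inr ⟨a', b', ha', hb', ?_⟩)⟩
  rw [commutingGraph, SimpleGraph.fromRel_adj]
  exact ⟨hab', Or.inl hcomm⟩

private lemma aux_adj_same {n : ℕ} {a b : Equiv.Perm (Fin n)} (hab : a ≠ b)
    (h : orderOf a = orderOf b) :
    (orderSuper (Equiv.Perm (Fin n)) (commutingGraph (Equiv.Perm (Fin n)))).Adj a b := by
  rw [orderSuper, SimpleGraph.fromRel_adj]
  exact ⟨hab, Or.inl (Or.inl h)⟩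

/-- In the induced graph on non-identity permutations, an edge gives distance ≤ 1. -/
private lemma aux_dist_le_one {n : ℕ} {a b : Equiv.Perm (Fin n)} (ha : a ≠ 1) (hb : b ≠ 1)
    (h : (orderSuper (Equiv.Perm (Fin n)) (commutingGraph (Equiv.Perm (Fin n)))).Adj a b) :
    (SimpleGraph.induce {σ : Equiv.Perm (Fin n) | σ ≠ 1}
      (orderSuper (Equiv.Perm (Fin n)) (commutingGraph (Equiv.Perm (Fin n))))).dist
        ⟨a, ha⟩ ⟨b, hb⟩ ≤ 1 := by
  have hadj : (SimpleGraph.induce {σ : Equiv.Perm (Fin n) | σ ≠ 1}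
      (orderSuper (Equiv.Perm (Fin n)) (commutingGraph (Equiv.Perm (Fin n))))).Adj
        ⟨a, ha⟩ ⟨b, hb⟩ := h
  have := SimpleGraph.dist_le (SimpleGraph.Walk.cons hadj SimpleGraph.Walk.nil)
  simpa using this

private lemma aux_dist_le_two {n : ℕ} {a b c : Equiv.Perm (Fin n)} (ha : a ≠ 1) (hb : b ≠ 1)
    (hc : c ≠ 1)
    (h1 : (orderSuper (Equiv.Perm (Fin n)) (commutingGraph (Equiv.Perm (Fin n)))).Adj a b)
    (h2 : (orderSuper (Equiv.Perm (Fin n)) (commutingGraph (Equiv.Perm (Fin n)))).Adj b c) :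
    (SimpleGraph.induce {σ : Equiv.Perm (Fin n) | σ ≠ 1}
      (orderSuper (Equiv.Perm (Fin n)) (commutingGraph (Equiv.Perm (Fin n))))).dist
        ⟨a, ha⟩ ⟨c, hc⟩ ≤ 2 := by
  have hadj1 : (SimpleGraph.induce {σ : Equiv.Perm (Fin n) | σ ≠ 1}
      (orderSuper (Equiv.Perm (Fin n)) (commutingGraph (Equiv.Perm (Fin n))))).Adj
        ⟨a, ha⟩ ⟨b, hb⟩ := h1
  have hadj2 : (SimpleGraph.induce {σ : Equiv.Perm (Fin n) | σ ≠ 1}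
      (orderSuper (Equiv.Perm (Fin n)) (commutingGraph (Equiv.Perm (Fin n))))).Adj
        ⟨b, hb⟩ ⟨c, hc⟩ := h2
  have := SimpleGraph.dist_le
    (SimpleGraph.Walk.cons hadj1 (SimpleGraph.Walk.cons hadj2 SimpleGraph.Walk.nil))
  simpa using this

/-- For `n ≥ 4` with neither `n` nor `n - 1` prime, every non-identity permutation is
within distance `2` in the reduced order super commuting graph of `S_n` of some
non-identity element of order `2`. -/
theorem reduced_orderSuper_commutingGraph_symmetricGroup_dist_two
    (n : ℕ) (hn : 4 ≤ n) (h1 : ¬ n.Prime) (h2 : ¬ (n - 1).Prime)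
    (x : Equiv.Perm (Fin n)) (hx : x ≠ 1) :
    ∃ (y : Equiv.Perm (Fin n)) (hy : y ≠ 1), orderOf y = 2 ∧
      (SimpleGraph.induce {σ : Equiv.Perm (Fin n) | σ ≠ 1}
        (orderSuper (Equiv.Perm (Fin n))
          (commutingGraph (Equiv.Perm (Fin n))))).dist ⟨x, hx⟩ ⟨y, hy⟩ ≤ 2 := by
  classical
  have hq1 : orderOf x ≠ 1 := fun h => hx (orderOf_eq_one_iff.mp h)
  have hq0 : orderOf x ≠ 0 := (orderOf_pos x).ne'
  set q := orderOf x with hqdef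
  set p := q.minFac with hpdef
  have hp : p.Prime := Nat.minFac_prime hq1
  have hp2 := hp.two_le
  have hpq : p ∣ q := Nat.minFac_dvd q
  have hqcard : q ∣ Nat.factorial n := by
    have h := orderOf_dvd_card (x := x)
    simpa [Fintype.card_perm, Fintype.card_fin] using h
  have hpn : p ≤ n := (Nat.Prime.dvd_factorial hp).mp (hpq.trans hqcard)
  have hpn2 : p ≤ n - 2 := by
    have e1 : p ≠ n := fun h => h1 (h ▸ hp)
    have e2 : p ≠ n - 1 := fun h => h2 (h ▸ hp)
    omega
  obtain ⟨m, rfl⟩ : ∃ m, n = m + 1 := ⟨n - 1, by omega⟩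
  -- the `p`-cycle `c` on the first `p` points
  set i : Fin (m + 1) := ⟨p - 1, by omega⟩ with hi
  have hiv : (i : ℕ) = p - 1 := rfl
  have hi0 : i ≠ 0 := by
    intro h
    have h' := congrArg Fin.val h
    rw [hiv] at h'
    simp at h'
    omega
  set c : Equiv.Perm (Fin (m + 1)) := Fin.cycleRange i with hcdef
  have hoc : orderOf c = p := by
    rw [hcdef, ← Equiv.Perm.lcm_cycleType, Fin.cycleType_cycleRange hi0]
    simp [hiv]
    omega
  have hc1 : c ≠ 1 := by
    intro h
    rw [h, orderOf_one] at hoc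
    omega
  -- the swap `y` on the last two points
  set a : Fin (m + 1) := ⟨m - 1, by omega⟩ with ha
  set b : Fin (m + 1) := ⟨m, by omega⟩ with hb
  have hab : a ≠ b := by
    intro h; have h' := congrArg Fin.val h; simp [ha, hb] at h'; omega
  set y : Equiv.Perm (Fin (m + 1)) := Equiv.swap a b with hydef
  have hy1 : y ≠ 1 := fun h => hab (Equiv.swap_eq_one_iff.mp h)
  have hoy : orderOf y = 2 :=
    orderOf_eq_prime (by rw [pow_two, hydef]; exact Equiv.swap_mul_self a b) hy1
  -- `c` and `y` commute and are distinct
  have hfix : ∀ j : Fin (m + 1), p ≤ (j : ℕ) → c j = j := by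
    intro j hj
    exact Fin.cycleRange_of_gt (by rw [Fin.lt_def, hiv]; omega)
  have hdisj : Equiv.Perm.Disjoint c y := by
    intro j
    rcases le_or_gt p (j : ℕ) with h | h
    · exact Or.inl (hfix j h)
    · right
      apply Equiv.swap_apply_of_ne_of_ne
      · intro hja; have h' := congrArg Fin.val hja; simp [ha] at h'; omega
      · intro hjb; have h' := congrArg Fin.val hjb; simp [hb] at h'; omega
  have hcomm : c * y = y * c := hdisj.commute
  have hcy : c ≠ y := by
    have hm3 : 3 ≤ m := by omega
    set z0 : Fin (m + 1) := ⟨0, by omega⟩ with hz0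
    have hcz : c z0 = z0 + 1 :=
      Fin.cycleRange_of_lt (by rw [Fin.lt_def]; show (0 : ℕ) < p - 1; omega)
    have hyz : y z0 = z0 := by
      apply Equiv.swap_apply_of_ne_of_ne
      · intro h'; have h'' := congrArg Fin.val h'; simp [hz0, ha] at h''; omega
      · intro h'; have h'' := congrArg Fin.val h'; simp [hz0, hb] at h''; omega
    intro h
    rw [h, hyz] at hcz
    have h'' := congrArg Fin.val hcz
    rw [Fin.val_add] at h''
    simp [hz0] at h''
    omega
  have hadj_cy : (orderSuper (Equiv.Perm (Fin (m + 1)))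
      (commutingGraph (Equiv.Perm (Fin (m + 1))))).Adj c y :=
    aux_adj_pair hcy rfl rfl hcy hcomm
  by_cases hxc : x = c
  · -- direct edge x — y
    refine ⟨y, hy1, hoy, ?_⟩
    have : (SimpleGraph.induce {σ : Equiv.Perm (Fin (m + 1)) | σ ≠ 1}
        (orderSuper (Equiv.Perm (Fin (m + 1)))
          (commutingGraph (Equiv.Perm (Fin (m + 1)))))).dist ⟨x, hx⟩ ⟨y, hy1⟩ ≤ 1 := by
      have heq : (⟨x, hx⟩ : {σ : Equiv.Perm (Fin (m + 1)) | σ ≠ 1}) = ⟨c, hc1⟩ :=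
        Subtype.ext hxc
      rw [heq]
      exact aux_dist_le_one hc1 hy1 hadj_cy
    omega
  · -- path x — c — y
    refine ⟨y, hy1, hoy, ?_⟩
    have hadj_xc : (orderSuper (Equiv.Perm (Fin (m + 1)))
        (commutingGraph (Equiv.Perm (Fin (m + 1))))).Adj x c := by
      by_cases hqp : q = p
      · exact aux_adj_same hxc (by rw [← hqdef, hoc, hqp])
      · refine aux_adj_pair (b' := x ^ (q / p)) hxc rfl ?_ ?_ ?_
        · rw [hoc, orderOf_pow, ← hqdef, Nat.gcd_eq_right (Nat.div_dvd_of_dvd hpq),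
            Nat.div_div_self hpq hq0]
        · intro h
          apply hqp
          have h' : orderOf (x ^ (q / p)) = p := by
            rw [orderOf_pow, ← hqdef, Nat.gcd_eq_right (Nat.div_dvd_of_dvd hpq),
              Nat.div_div_self hpq hq0]
          rw [← h, ← hqdef] at h'
          exact h'.symm ▸ rfl
        · exact ((Commute.refl x).pow_right (q / p)).eq
    exact aux_dist_le_two hx hc1 hy1 hadj_xc hadj_cy
end

section
/- Let n ≥ 4 with neither n nor n−1 prime. Then the diameter of the reduced order super commuting graph Δ^o(S_n)^* is at most 3; that is, for all non-identity x, y ∈ S_n, the distance between x and y in Δ^o(S_n)^* is at most 3. -/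
/-! Call a prime `p` with `2 * p < n` a hub. Adjacency in the order super commuting graph only
asks for *some* commuting pair with the right orders, so the order of every `x ≠ 1` in `S_n`
is linked to a hub: either `o(x)` has a hub prime factor `p` and `x, x ^ (o(x) / p)` commute,
or every prime factor of `o(x)` is at least `n / 2`, which forces all cycles of `x` to have the
same prime length `o(x)`; as neither `n` nor `n - 1` is prime, such a cycle leaves room for a
disjoint transposition, and `2` is a hub. Two hubs `p, q` are linked by the commuting powers of
a permutation of cycle type `{p, q}`, so `x — u — v — y` with `o(u), o(v)` hubs is a path. -/

open Equiv Equiv.Perm Fintype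

def CommutingOrders (G : Type*) [Group G] (a b : ℕ) : Prop :=
  ∃ u v : G, Commute u v ∧ orderOf u = a ∧ orderOf v = b

def reducedOrderSuperCommutingGraph (G : Type*) [Group G] : SimpleGraph {g : G | g ≠ 1} :=
  SimpleGraph.induce {g : G | g ≠ 1} (orderSuper G (commutingGraph G))

section CommutingOrders

variable {G : Type*} [Group G]

theorem CommutingOrders.symm {a b : ℕ} (h : CommutingOrders G a b) : CommutingOrders G b a :=
  let ⟨u, v, huv, hu, hv⟩ := h
  ⟨v, u, huv.symm, hv, hu⟩

theorem commutingOrders_of_dvd_orderOf [Finite G] {g : G} {a b : ℕ} (ha : a ∣ orderOf g)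
    (hb : b ∣ orderOf g) : CommutingOrders G a b :=
  ⟨g ^ (orderOf g / a), g ^ (orderOf g / b), (Commute.refl g).pow_pow _ _,
    orderOf_pow_orderOf_div (orderOf_pos g).ne' ha,
    orderOf_pow_orderOf_div (orderOf_pos g).ne' hb⟩

theorem orderSuper_commutingGraph_adj_s16 {s t : G} (hst : s ≠ t)
    (h : CommutingOrders G (orderOf s) (orderOf t)) :
    (orderSuper G (commutingGraph G)).Adj s t := by
  obtain ⟨u, v, huv, hu, hv⟩ := h
  refine SimpleGraph.fromRel_adj _ _ _ |>.mpr ⟨hst, Or.inl ?_⟩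
  by_cases hord : orderOf s = orderOf t
  · exact Or.inl hord
  · have hne : u ≠ v := fun h => hord (hu ▸ hv ▸ congrArg orderOf h)
    exact Or.inr ⟨u, v, hu, hv, SimpleGraph.fromRel_adj _ _ _ |>.mpr ⟨hne, Or.inl huv⟩⟩

theorem reducedOrderSuperCommutingGraph_edist_le_one {s t : G} (hs : s ≠ 1) (ht : t ≠ 1)
    (h : CommutingOrders G (orderOf s) (orderOf t)) :
    (reducedOrderSuperCommutingGraph G).edist ⟨s, hs⟩ ⟨t, ht⟩ ≤ 1 := by
  rw [SimpleGraph.edist_le_one_iff_adj_or_eq]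
  by_cases hst : s = t
  · exact Or.inr (Subtype.ext hst)
  · exact Or.inl (orderSuper_commutingGraph_adj_s16 hst h)

end CommutingOrders

namespace Equiv.Perm

variable {α : Type*} [Fintype α] [DecidableEq α]

theorem commutingOrders_of_add_le {a b : ℕ} (ha : 2 ≤ a) (hb : 2 ≤ b) (h : a + b ≤ card α) :
    CommutingOrders (Perm α) a b := by
  obtain ⟨g, hg⟩ := (exists_with_cycleType_iff (m := {a, b}) α).mpr
    ⟨by simpa using h, by simp [ha, hb]⟩
  exact commutingOrders_of_dvd_orderOf (g := g) (dvd_of_mem_cycleType (by simp [hg]))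
    (dvd_of_mem_cycleType (by simp [hg]))

theorem add_le_card_of_mem_cycleType {σ : Perm α} {a b : ℕ} (ha : a ∈ σ.cycleType)
    (hb : b ∈ σ.cycleType) (hab : a ≠ b) : a + b ≤ card α := by
  obtain ⟨s, hs⟩ := Multiset.exists_cons_of_mem ha
  rw [hs, Multiset.mem_cons] at hb
  obtain ⟨t, rfl⟩ := Multiset.exists_cons_of_mem (hb.resolve_left hab.symm)
  have hsum := σ.sum_cycleType_le
  rw [hs, Multiset.sum_cons, Multiset.sum_cons] at hsum
  omega

theorem orderOf_prime_of_card_le_two_mul {σ : Perm α} (h4 : 4 < card α) (hσ : σ ≠ 1)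
    (h : ∀ p, p.Prime → p ∣ orderOf σ → card α ≤ 2 * p) :
    (orderOf σ).Prime ∧ orderOf σ ≤ card α := by
  have hle : ∀ ℓ ∈ σ.cycleType, ℓ ≤ card α := fun ℓ hℓ =>
    (le_card_support_of_mem_cycleType hℓ).trans (Finset.card_le_univ _)
  have hodd : ¬ 2 ∣ orderOf σ := fun h2 => by
    have := h 2 Nat.prime_two h2
    omega
  have hprime : ∀ ℓ ∈ σ.cycleType, ℓ.Prime := by
    intro ℓ hℓ
    have hℓσ := dvd_of_mem_cycleType hℓ
    have hℓ2 := two_le_of_mem_cycleType hℓ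
    have hqn := h _ (Nat.minFac_prime (by omega)) ((Nat.minFac_dvd ℓ).trans hℓσ)
    have hℓ_ne : ℓ ≠ 2 * ℓ.minFac := fun heq => hodd ((heq ▸ dvd_mul_right 2 _).trans hℓσ)
    have hℓ_le := hle ℓ hℓ
    exact Nat.prime_def_minFac.mpr
      ⟨hℓ2, (Nat.eq_of_dvd_of_lt_two_mul (by omega) (Nat.minFac_dvd ℓ) (by omega)).symm⟩
  have hconst : ∀ ℓ₁ ∈ σ.cycleType, ∀ ℓ₂ ∈ σ.cycleType, ℓ₁ = ℓ₂ := by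
    intro ℓ₁ h₁ ℓ₂ h₂
    by_contra hne
    have := add_le_card_of_mem_cycleType h₁ h₂ hne
    have := h ℓ₁ (hprime ℓ₁ h₁) (dvd_of_mem_cycleType h₁)
    have := h ℓ₂ (hprime ℓ₂ h₂) (dvd_of_mem_cycleType h₂)
    omega
  obtain ⟨ℓ, hℓ⟩ := Multiset.exists_mem_of_ne_zero (cycleType_eq_zero.not.mpr hσ)
  have hord : orderOf σ = ℓ := by
    refine Nat.dvd_antisymm ?_ (dvd_of_mem_cycleType hℓ)
    rw [← lcm_cycleType, Multiset.lcm_dvd]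
    exact fun b hb => (hconst b hb ℓ hℓ).dvd
  exact hord ▸ ⟨hprime ℓ hℓ, hle ℓ hℓ⟩

theorem exists_prime_commutingOrders (h4 : 4 < card α) (h1 : ¬ (card α).Prime)
    (h2 : ¬ (card α - 1).Prime) {σ : Perm α} (hσ : σ ≠ 1) :
    ∃ p, p.Prime ∧ 2 * p < card α ∧ CommutingOrders (Perm α) (orderOf σ) p := by
  by_cases hsmall : ∃ p, p.Prime ∧ 2 * p < card α ∧ p ∣ orderOf σ
  · obtain ⟨p, hp, hpn, hpσ⟩ := hsmall
    exact ⟨p, hp, hpn, commutingOrders_of_dvd_orderOf dvd_rfl hpσ⟩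
  · obtain ⟨hprime, hle⟩ := orderOf_prime_of_card_le_two_mul h4 hσ fun p hp hpσ =>
      not_lt.mp fun hpn => hsmall ⟨p, hp, hpn, hpσ⟩
    have hne : orderOf σ ≠ card α := fun h => h1 (h ▸ hprime)
    have hne' : orderOf σ ≠ card α - 1 := fun h => h2 (h ▸ hprime)
    exact ⟨2, Nat.prime_two, by omega,
      commutingOrders_of_add_le hprime.two_le le_rfl (by omega)⟩

theorem reducedOrderSuperCommutingGraph_edist_le_three (h4 : 4 < card α)
    (h1 : ¬ (card α).Prime) (h2 : ¬ (card α - 1).Prime) {x y : Perm α} (hx : x ≠ 1)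
    (hy : y ≠ 1) : (reducedOrderSuperCommutingGraph (Perm α)).edist ⟨x, hx⟩ ⟨y, hy⟩ ≤ 3 := by
  obtain ⟨p, hp, hpn, hxp⟩ := exists_prime_commutingOrders h4 h1 h2 hx
  obtain ⟨q, hq, hqn, hyq⟩ := exists_prime_commutingOrders h4 h1 h2 hy
  obtain ⟨u, v, huv, hu, hv⟩ := commutingOrders_of_add_le (α := α) hp.two_le hq.two_le (by omega)
  have hu1 : u ≠ 1 := fun h => hp.one_lt.ne' (by rw [← hu, h, orderOf_one])
  have hv1 : v ≠ 1 := fun h => hq.one_lt.ne' (by rw [← hv, h, orderOf_one])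
  set Γ := reducedOrderSuperCommutingGraph (Perm α)
  calc Γ.edist ⟨x, hx⟩ ⟨y, hy⟩
      ≤ Γ.edist ⟨x, hx⟩ ⟨u, hu1⟩ + Γ.edist ⟨u, hu1⟩ ⟨v, hv1⟩ + Γ.edist ⟨v, hv1⟩ ⟨y, hy⟩ :=
        Γ.edist_triangle.trans (add_le_add_left Γ.edist_triangle _)
    _ ≤ 1 + 1 + 1 := by
      gcongr
      · exact reducedOrderSuperCommutingGraph_edist_le_one hx hu1 (hu ▸ hxp)
      · exact reducedOrderSuperCommutingGraph_edist_le_one hu1 hv1 ⟨u, v, huv, rfl, rfl⟩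
      · exact reducedOrderSuperCommutingGraph_edist_le_one hv1 hy (hv ▸ hyq.symm)
    _ = 3 := by norm_num

end Equiv.Perm

/-- For `n ≥ 4` with neither `n` nor `n - 1` prime, the reduced order super commuting
graph of `S_n` has diameter at most `3`. -/
theorem reduced_orderSuper_commutingGraph_symmetricGroup_diam_le_three
    (n : ℕ) (hn : 4 ≤ n) (h1 : ¬ n.Prime) (h2 : ¬ (n - 1).Prime)
    (x y : Equiv.Perm (Fin n)) (hx : x ≠ 1) (hy : y ≠ 1) :
    (SimpleGraph.induce {σ : Equiv.Perm (Fin n) | σ ≠ 1}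
      (orderSuper (Equiv.Perm (Fin n))
        (commutingGraph (Equiv.Perm (Fin n))))).dist ⟨x, hx⟩ ⟨y, hy⟩ ≤ 3 := by
  have h4 : 4 < n := by
    rcases hn.eq_or_lt with rfl | h
    · norm_num at h2
    · exact h
  rw [← Fintype.card_fin n] at h4 h1 h2
  exact ENat.toNat_le_of_le_natCast
    (reducedOrderSuperCommutingGraph_edist_le_three h4 h1 h2 hx hy)
end
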